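/- arXiv:2301.01527 — 6 statements merged into one kernel-verified Lean document; each statement's English description precedes it below -/
import Mathlib

section
/- Let E be a real inner product space and let r ≥ 1 be a real number. Then for all a, b ∈ E one has ⟨‖a‖^{r-1}·a − ‖b‖^{r-1}·b, a − b⟩ ≥ (1/2)‖a‖^{r-1}‖a − b‖² + (1/2)‖b‖^{r-1}‖a − b‖². -/
open RealInnerProductSpace

/-- Monotonicity inequality for the damping nonlinearity `C(y) = |y|^{r-1} y`:
for a real inner product space `E` and `r ≥ 1`,
`⟨‖a‖^{r-1} a − ‖b‖^{r-1} b, a − b⟩ ≥ ½‖a‖^{r-1}‖a−b‖² + ½‖b‖^{r-1}‖a−b‖²`. -/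
theorem damping_monotonicity_weighted
    {E : Type*} [NormedAddCommGroup E] [InnerProductSpace ℝ E]
    (r : ℝ) (hr : 1 ≤ r) (a b : E) :
    ⟪(‖a‖ ^ (r - 1)) • a - (‖b‖ ^ (r - 1)) • b, a - b⟫ ≥
      (1 / 2) * ‖a‖ ^ (r - 1) * ‖a - b‖ ^ 2 +
        (1 / 2) * ‖b‖ ^ (r - 1) * ‖a - b‖ ^ 2 := by
  set α := ‖a‖ ^ (r - 1) with hα
  set β := ‖b‖ ^ (r - 1) with hβ
  have hkey : (α - β) * (‖a‖ ^ 2 - ‖b‖ ^ 2) ≥ 0 := by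
    rcases le_total (‖a‖) (‖b‖) with h | h
    · have h1 : α ≤ β := Real.rpow_le_rpow (norm_nonneg a) h (by linarith)
      have h2 : ‖a‖ ^ 2 ≤ ‖b‖ ^ 2 := by nlinarith [norm_nonneg a]
      nlinarith
    · have h1 : β ≤ α := Real.rpow_le_rpow (norm_nonneg b) h (by linarith)
      have h2 : ‖b‖ ^ 2 ≤ ‖a‖ ^ 2 := by nlinarith [norm_nonneg b]
      nlinarith
  have hab2 : ‖a - b‖ ^ 2 = ‖a‖ ^ 2 - 2 * ⟪a, b⟫ + ‖b‖ ^ 2 := by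
    rw [@norm_sub_sq_real]
  have hexp : ⟪(α : ℝ) • a - β • b, a - b⟫
      = α * ‖a‖ ^ 2 - (α + β) * ⟪a, b⟫ + β * ‖b‖ ^ 2 := by
    rw [inner_sub_left, inner_sub_right, inner_sub_right,
      real_inner_smul_left, real_inner_smul_left, real_inner_smul_left,
      real_inner_smul_left, real_inner_self_eq_norm_sq,
      real_inner_self_eq_norm_sq, real_inner_comm b a]
    ring
  rw [hexp, hab2]
  nlinarith [hkey]
end

section
/- Let E be a real inner product space and let r ≥ 1 be a real number. Then for all a, b ∈ E one has ⟨‖a‖^{r-1}·a − ‖b‖^{r-1}·b, a − b⟩ ≥ 2^{1−r}·‖a − b‖^{r+1}; in particular this pairing is nonnegative, so the map u ↦ ‖u‖^{r-1}·u is monotone. -/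
lemma aux_convex {u v w p : ℝ} (hu : 0 ≤ u) (hv : 0 ≤ v) (hw0 : 0 ≤ w) (hw1 : w ≤ 1)
    (hp : 1 ≤ p) : (w * u + (1 - w) * v) ^ p ≤ w * u ^ p + (1 - w) * v ^ p := by
  have h := (convexOn_rpow hp).2 (Set.mem_Ici.2 hu) (Set.mem_Ici.2 hv) hw0
    (by linarith : (0:ℝ) ≤ 1 - w) (by ring)
  simpa using h

lemma aux_superadd {x y p : ℝ} (hx : 0 ≤ x) (hy : 0 ≤ y) (hp : 1 ≤ p) :
    x ^ p + y ^ p ≤ (x + y) ^ p := by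
  have h := NNReal.add_rpow_le_rpow_add x.toNNReal y.toNNReal hp
  rw [← Real.toNNReal_add hx hy] at h
  have h2 := NNReal.coe_le_coe.2 h
  rw [NNReal.coe_add, NNReal.coe_rpow, NNReal.coe_rpow, NNReal.coe_rpow,
    Real.coe_toNNReal _ hx, Real.coe_toNNReal _ hy, Real.coe_toNNReal _ (add_nonneg hx hy)] at h2
  exact h2

lemma aux_pm {u v p : ℝ} (hu : 0 ≤ u) (hv : 0 ≤ v) (hp : 1 ≤ p) :
    (2:ℝ) ^ (1 - p) * (u + v) ^ p ≤ u ^ p + v ^ p := by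
  have h := aux_convex hu hv (by norm_num : (0:ℝ) ≤ 1/2) (by norm_num) hp
  have e1 : (1/2 : ℝ) * u + (1 - 1/2) * v = (u + v)/2 := by ring
  rw [e1] at h
  have e2 : ((u+v)/2 : ℝ) ^ p = (u+v)^p / 2^p := Real.div_rpow (by linarith) (by norm_num : (0:ℝ) ≤ 2) p
  have e3 : (2:ℝ) ^ (1-p) = 2 / 2^p := by
    rw [Real.rpow_sub (by norm_num : (0:ℝ) < 2), Real.rpow_one]
  rw [e3]
  rw [e2] at h
  have h2p : (0:ℝ) < 2 ^ p := Real.rpow_pos_of_pos (by norm_num) p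
  rw [div_mul_eq_mul_div, div_le_iff₀ h2p]
  rw [div_le_iff₀ h2p] at h
  nlinarith [h]

lemma aux_sq_rpow {t p : ℝ} (ht : 0 ≤ t) : (t^2 : ℝ) ^ ((p+1)/2) = t ^ (p+1) := by
  rw [← Real.rpow_natCast t 2, ← Real.rpow_mul ht]
  norm_num
  ring_nf

lemma rpow_succ' {t : ℝ} (ht : 0 < t) (p : ℝ) : t ^ (p+1) = t ^ p * t := by
  rw [Real.rpow_add ht, Real.rpow_one]

lemma aux_split {t r : ℝ} (ht : 0 < t) : t^(r+1) = t^(r-1)*t^2 ∧ t^r = t^(r-1)*t := by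
  have e2 : t^r = t^(r-1)*t := by
    have h := rpow_succ' ht (r-1); rwa [show r-1+1=r by ring] at h
  have e1 : t^(r+1) = t^(r-1)*t^2 := by rw [rpow_succ' ht r, e2]; ring
  exact ⟨e1, e2⟩

lemma aux_merge {t r : ℝ} (ht : 0 ≤ t) (hr : 1 ≤ r) : t^(r-1)*(t*t) = t^(r+1) := by
  rcases eq_or_lt_of_le ht with h | h
  · rw [← h]
    rw [Real.zero_rpow (by intro h'; nlinarith : r + 1 ≠ 0)]
    ring
  · rw [rpow_succ' h r]
    conv_rhs => rw [(aux_split h).2]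
    rw [mul_assoc]

lemma aux_21 {r : ℝ} (hr : 1 ≤ r) : (2:ℝ)^(1-r) ≤ 1 :=
  Real.rpow_le_one_of_one_le_of_nonpos (by norm_num) (by linarith)

-- 2^{1-r}(x-y)^{r+1} ≤ (x^r - y^r)(x - y) when 0 ≤ y ≤ x
lemma aux_A {x y r : ℝ} (hy : 0 ≤ y) (hxy : y ≤ x) (hr : 1 ≤ r) :
    (2:ℝ)^(1-r) * (x-y)^(r+1) ≤ (x^r - y^r)*(x-y) := by
  have hd : 0 ≤ x - y := by linarith
  have hsup : (x-y)^r + y^r ≤ x^r := by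
    have := aux_superadd hd hy hr
    simpa using this
  have hexp : (x-y)^(r+1) = (x-y)^r * (x-y) := by
    rcases eq_or_lt_of_le hd with h | h
    · rw [← h, Real.zero_rpow (by intro h'; nlinarith : r + 1 ≠ 0)]; ring
    · exact rpow_succ' h r
  have h21 := aux_21 hr
  have hpow : (0:ℝ) ≤ (x-y)^r := Real.rpow_nonneg hd r
  rw [hexp]
  have hAB : (x-y)^r ≤ x^r - y^r := by nlinarith [Real.rpow_nonneg hy r]
  have s1 : (2:ℝ)^(1-r) * ((x-y)^r*(x-y)) ≤ 1 * ((x-y)^r*(x-y)) :=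
    mul_le_mul_of_nonneg_right h21 (mul_nonneg hpow hd)
  have s2 : (x-y)^r*(x-y) ≤ (x^r-y^r)*(x-y) := mul_le_mul_of_nonneg_right hAB hd
  linarith

lemma aux_key {x y c r : ℝ} (hx : 0 ≤ x) (hy : 0 ≤ y) (hr : 1 ≤ r)
    (hc1 : c ≤ x*y) (hc2 : -(x*y) ≤ c) :
    (2:ℝ)^(1-r) * (x^2 - 2*c + y^2)^((r+1)/2) ≤ x^(r+1) + y^(r+1) - (x^(r-1)+y^(r-1))*c := by
  have h21 := aux_21 hr
  rcases eq_or_lt_of_le hx with h0 | hx'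
  · -- x = 0 so c = 0
    have hc : c = 0 := by rw [← h0] at hc1 hc2; simp at hc1 hc2; linarith
    subst hc
    rw [← h0]
    rw [Real.zero_rpow (by intro h'; nlinarith : r + 1 ≠ 0)]
    have : ((0:ℝ)^2 - 2*0 + y^2) = y^2 := by ring
    rw [this, aux_sq_rpow hy]
    have := Real.rpow_nonneg hy (r+1)
    nlinarith
  rcases eq_or_lt_of_le hy with h0 | hy'
  · have hc : c = 0 := by rw [← h0] at hc1 hc2; simp at hc1 hc2; linarith
    subst hc
    rw [← h0]
    rw [Real.zero_rpow (by intro h'; nlinarith : r + 1 ≠ 0)]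
    have : (x^2 - 2*0 + (0:ℝ)^2) = x^2 := by ring
    rw [this, aux_sq_rpow hx]
    have := Real.rpow_nonneg hx (r+1)
    nlinarith
  -- main case
  have hxy : 0 < x*y := mul_pos hx' hy'
  set w : ℝ := (x*y+c)/(2*(x*y)) with hw
  have hw0 : 0 ≤ w := div_nonneg (by linarith) (by linarith)
  have hw1 : w ≤ 1 := by rw [hw, div_le_one (by linarith)]; linarith
  have hs : (1:ℝ) ≤ (r+1)/2 := by linarith
  have hu : (0:ℝ) ≤ (x-y)^2 := sq_nonneg _
  have hv : (0:ℝ) ≤ (x+y)^2 := sq_nonneg _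
  have hconv := aux_convex hu hv hw0 hw1 hs
  have hlin : w*(x-y)^2 + (1-w)*(x+y)^2 = x^2 - 2*c + y^2 := by
    rw [hw]; field_simp; ring
  have hsq1 : ((x-y)^2 : ℝ)^((r+1)/2) = |x-y|^(r+1) := by
    rw [← sq_abs, aux_sq_rpow (abs_nonneg _)]
  have hsq2 : ((x+y)^2 : ℝ)^((r+1)/2) = (x+y)^(r+1) := aux_sq_rpow (by linarith)
  have hA : (2:ℝ)^(1-r) * |x-y|^(r+1) ≤ (x^r - y^r)*(x-y) := by
    rcases le_total y x with h | h
    · rw [abs_of_nonneg (by linarith)]; exact aux_A hy h hr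
    · rw [abs_of_nonpos (by linarith)]
      have := aux_A hx h hr
      have e : (y^r - x^r)*(y-x) = (x^r - y^r)*(x-y) := by ring
      rw [e] at this
      convert this using 2
      ring
  have hB : (2:ℝ)^(1-r) * (x+y)^(r+1) ≤ (x^r + y^r)*(x+y) := by
    have hpm := aux_pm hx hy hr
    have hexp : (x+y)^(r+1) = (x+y)^r * (x+y) := rpow_succ' (by linarith) r
    rw [hexp, ← mul_assoc]
    exact mul_le_mul_of_nonneg_right hpm (by linarith)
  have hrlin : x^(r+1) + y^(r+1) - (x^(r-1)+y^(r-1))*c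
      = w*((x^r - y^r)*(x-y)) + (1-w)*((x^r + y^r)*(x+y)) := by
    obtain ⟨ex1, ex2⟩ := aux_split hx'
    obtain ⟨ey1, ey2⟩ := aux_split hy'
    rw [ex1, ex2, ey1, ey2, hw]
    field_simp
    ring
  have h2pos : (0:ℝ) < (2:ℝ)^(1-r) := Real.rpow_pos_of_pos (by norm_num) _
  have t1 : (2:ℝ)^(1-r) * ((w*(x-y)^2 + (1-w)*(x+y)^2)^((r+1)/2))
      ≤ (2:ℝ)^(1-r) * (w*((x-y)^2)^((r+1)/2) + (1-w)*((x+y)^2)^((r+1)/2)) :=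
    mul_le_mul_of_nonneg_left hconv (le_of_lt h2pos)
  rw [hlin] at t1
  rw [hsq1, hsq2] at t1
  have t2 : w * ((2:ℝ)^(1-r) * |x-y|^(r+1)) ≤ w * ((x^r - y^r)*(x-y)) :=
    mul_le_mul_of_nonneg_left hA hw0
  have t3 : (1-w) * ((2:ℝ)^(1-r) * (x+y)^(r+1)) ≤ (1-w) * ((x^r + y^r)*(x+y)) :=
    mul_le_mul_of_nonneg_left hB (by linarith)
  rw [hrlin]
  nlinarith [t1, t2, t3]

open RealInnerProductSpace

/-- Strong monotonicity of the damping nonlinearity `C(y) = |y|^{r-1} y` with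
explicit constant `2^{1-r}`: for a real inner product space `E` and `r ≥ 1`,
`⟨‖a‖^{r-1} a − ‖b‖^{r-1} b, a − b⟩ ≥ 2^{1−r} ‖a − b‖^{r+1}`; in particular the
pairing is nonnegative, i.e. `u ↦ ‖u‖^{r-1} u` is monotone. -/
theorem damping_strong_monotonicity
    {E : Type*} [NormedAddCommGroup E] [InnerProductSpace ℝ E]
    (r : ℝ) (hr : 1 ≤ r) (a b : E) :
    ⟪(‖a‖ ^ (r - 1)) • a - (‖b‖ ^ (r - 1)) • b, a - b⟫ ≥
      (2 : ℝ) ^ (1 - r) * ‖a - b‖ ^ (r + 1) ∧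
    0 ≤ ⟪(‖a‖ ^ (r - 1)) • a - (‖b‖ ^ (r - 1)) • b, a - b⟫ := by
  have hinner : ⟪(‖a‖ ^ (r - 1)) • a - (‖b‖ ^ (r - 1)) • b, a - b⟫
      = ‖a‖^(r-1)*(‖a‖*‖a‖) + ‖b‖^(r-1)*(‖b‖*‖b‖)
        - (‖a‖^(r-1)+‖b‖^(r-1))*⟪a, b⟫ := by
    rw [inner_sub_left, inner_sub_right, inner_sub_right, real_inner_smul_left,
      real_inner_smul_left, real_inner_smul_left, real_inner_smul_left,
      real_inner_self_eq_norm_mul_norm, real_inner_self_eq_norm_mul_norm,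
      real_inner_comm b a]
    ring
  have habs := abs_real_inner_le_norm a b
  rw [abs_le] at habs
  have hkey := aux_key (norm_nonneg a) (norm_nonneg b) hr habs.2 habs.1
  have hnorm : ‖a-b‖^(r+1) = (‖a‖^2 - 2*⟪a, b⟫ + ‖b‖^2)^((r+1)/2) := by
    rw [← aux_sq_rpow (norm_nonneg (a-b)) (p := r)]
    congr 1
    exact norm_sub_sq_real a b
  have e1 := aux_merge (norm_nonneg a) hr
  have e2 := aux_merge (norm_nonneg b) hr
  have hmain : ⟪(‖a‖ ^ (r - 1)) • a - (‖b‖ ^ (r - 1)) • b, a - b⟫ ≥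
      (2 : ℝ) ^ (1 - r) * ‖a - b‖ ^ (r + 1) := by
    rw [ge_iff_le, hinner, hnorm]
    linarith [hkey]
  refine ⟨hmain, le_trans ?_ hmain⟩
  positivity
end

section
/- Let d ≥ 1, let r > 1 be a real number, and let y : ℝ^d → ℝ^d be twice continuously differentiable and ℤ^d-periodic. Then the function h(x) := ‖y(x)‖^{(r+1)/2} is differentiable on ℝ^d, and ∫_Q ⟨−Δy(x), ‖y(x)‖^{r−1}·y(x)⟩ dx = ∫_Q ‖y(x)‖^{r−1}·‖Dy(x)‖_F² dx + (4(r−1)/(r+1)²)·∫_Q ‖∇h(x)‖² dx, where Q = [0,1]^d. -/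
open MeasureTheory RealInnerProductSpace

noncomputable section

/-- The unit periodicity cell `Q = [0,1]^d` in `ℝ^d`. -/
def unitCube (d : ℕ) : Set (EuclideanSpace ℝ (Fin d)) :=
  {x | ∀ i, x i ∈ Set.Icc (0 : ℝ) 1}

/-- A vector field `u : ℝ^d → ℝ^d` is `ℤ^d`-periodic if `u(x + k) = u(x)`
for all `x ∈ ℝ^d` and `k ∈ ℤ^d`. -/
def IsZdPeriodic {d : ℕ} (u : EuclideanSpace ℝ (Fin d) → EuclideanSpace ℝ (Fin d)) : Prop :=
  ∀ (x : EuclideanSpace ℝ (Fin d)) (k : Fin d → ℤ),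
    u (x + (WithLp.equiv 2 (Fin d → ℝ)).symm (fun i => (k i : ℝ))) = u x

/-- A vector field `u : ℝ^d → ℝ^d` is divergence-free if `∑ i ∂ᵢ uᵢ(x) = 0` for all `x`. -/
def IsDivFree {d : ℕ} (u : EuclideanSpace ℝ (Fin d) → EuclideanSpace ℝ (Fin d)) : Prop :=
  ∀ x : EuclideanSpace ℝ (Fin d),
    ∑ i, fderiv ℝ u x (EuclideanSpace.single i 1) i = 0

/-- The componentwise Laplacian `Δu(x) = ∑ⱼ ∂ⱼ∂ⱼ u(x)` of a vector field. -/
def vecLaplacian {d : ℕ} (u : EuclideanSpace ℝ (Fin d) → EuclideanSpace ℝ (Fin d))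
    (x : EuclideanSpace ℝ (Fin d)) : EuclideanSpace ℝ (Fin d) :=
  ∑ j, fderiv ℝ (fun v => fderiv ℝ u v (EuclideanSpace.single j 1)) x
        (EuclideanSpace.single j 1)

/-- The squared Frobenius (Hilbert–Schmidt) norm of a linear map `ℝ^d → ℝ^d`,
as the sum of the squared Euclidean norms of its columns. -/
def frobSq {d : ℕ} (L : EuclideanSpace ℝ (Fin d) →L[ℝ] EuclideanSpace ℝ (Fin d)) : ℝ :=
  ∑ j, ‖L (EuclideanSpace.single j 1)‖ ^ 2

namespace LDIAux

open Asymptotics Filter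

variable {E : Type*} [NormedAddCommGroup E] [InnerProductSpace ℝ E]

omit [InnerProductSpace ℝ E] in
lemma isLittleO_norm_rpow' {c : ℝ} (hc : 1 < c) :
    (fun v : E => ‖v‖ ^ c) =o[nhds (0:E)] (fun v => v) := by
  rw [isLittleO_iff]
  intro ε hε
  have hδ : (0:ℝ) < ε ^ (1 / (c - 1)) := Real.rpow_pos_of_pos hε _
  filter_upwards [Metric.ball_mem_nhds (0:E) hδ] with v hv
  rw [Metric.mem_ball, dist_zero_right] at hv
  have h1 : ‖v‖ ^ c = ‖v‖ ^ (c - 1) * ‖v‖ := by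
    have h := Real.rpow_add' (x := ‖v‖) (norm_nonneg v) (y := c - 1) (z := 1)
      (by intro h; exact absurd (by linarith : c = 0) (by positivity))
    simpa [Real.rpow_one] using h
  have h2 : ‖v‖ ^ (c - 1) ≤ ε := by
    calc ‖v‖ ^ (c - 1) ≤ (ε ^ (1 / (c - 1))) ^ (c - 1) :=
          Real.rpow_le_rpow (norm_nonneg v) hv.le (by linarith)
      _ = ε := by
          rw [← Real.rpow_mul hε.le, one_div_mul_cancel (by linarith : c - 1 ≠ 0), Real.rpow_one]
  rw [Real.norm_of_nonneg (Real.rpow_nonneg (norm_nonneg v) _), h1]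
  exact mul_le_mul_of_nonneg_right h2 (norm_nonneg v)

lemma hasFDerivAt_norm_rpow_ne {c : ℝ} {v : E} (hv : v ≠ 0) :
    HasFDerivAt (fun u : E => ‖u‖ ^ c) ((c * ‖v‖ ^ (c - 2)) • (innerSL ℝ v : E →L[ℝ] ℝ)) v := by
  apply HasStrictFDerivAt.hasFDerivAt
  convert (hasStrictFDerivAt_norm_sq v).rpow_const (p := c / 2) (by simp [hv]) using 0
  simp_rw [← Real.rpow_natCast_mul (norm_nonneg _), ← Nat.cast_smul_eq_nsmul ℝ, smul_smul]
  ring_nf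

/-- derivative of `g = ‖y ·‖^(r-1) • y ·`. -/
lemma hasFDerivAt_rpow_smul {r : ℝ} (hr : 1 < r) {y : E → E} (hy : ContDiff ℝ 1 y)
    (x : E) :
    HasFDerivAt (fun v => ‖y v‖ ^ (r - 1) • y v)
      (‖y x‖ ^ (r - 1) • fderiv ℝ y x +
        ((((r - 1) * ‖y x‖ ^ (r - 3)) •
          ((innerSL ℝ (y x) : E →L[ℝ] ℝ).comp (fderiv ℝ y x))).smulRight (y x))) x := by
  rcases eq_or_ne (y x) 0 with h0 | h0
  · have hG : (‖y x‖ ^ (r - 1) • fderiv ℝ y x +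
        ((((r - 1) * ‖y x‖ ^ (r - 3)) •
          ((innerSL ℝ (y x) : E →L[ℝ] ℝ).comp (fderiv ℝ y x))).smulRight (y x))) = 0 := by
      rw [h0]
      ext w
      simp only [norm_zero, ContinuousLinearMap.add_apply, ContinuousLinearMap.smul_apply,
        ContinuousLinearMap.smulRight_apply, ContinuousLinearMap.coe_comp', Function.comp_apply,
        innerSL_apply_apply, inner_zero_left, mul_zero, zero_smul, smul_zero, add_zero,
        ContinuousLinearMap.zero_apply,
        Real.zero_rpow (by intro h; exact absurd (by linarith : r = 1) hr.ne' : (r-1) ≠ 0)]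
    rw [hG, hasFDerivAt_iff_isLittleO_nhds_zero]
    obtain ⟨K, t, ht, hK⟩ := (hy.contDiffAt (x := x)).exists_lipschitzOnWith
    have hb : (fun v => ‖y (x + v)‖ ^ (r - 1) • y (x + v) - ‖y x‖ ^ (r - 1) • y x - (0 : E →L[ℝ] E) v)
        =O[nhds 0] (fun v : E => ‖v‖ ^ r) := by
      rw [isBigO_iff]
      refine ⟨(K : ℝ) ^ r, ?_⟩
      have hmem : {v : E | x + v ∈ t} ∈ nhds (0 : E) := by
        have : Continuous (fun v : E => x + v) := continuous_const.add continuous_id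
        have := this.continuousAt (x := (0:E))
        exact this.preimage_mem_nhds (by simpa using ht)
      have hxt : x ∈ t := mem_of_mem_nhds ht
      filter_upwards [hmem] with v hv
      have hyb : ‖y (x + v)‖ ≤ K * ‖v‖ := by
        have := hK.dist_le_mul (x + v) hv x hxt
        simpa [h0, dist_eq_norm] using this
      have h1 : ‖‖y (x + v)‖ ^ (r - 1) • y (x + v) - ‖y x‖ ^ (r - 1) • y x - (0 : E →L[ℝ] E) v‖
          = ‖y (x + v)‖ ^ r := by
        rw [h0]
        simp only [norm_zero, Real.zero_rpow (by intro h; exact absurd (by linarith : r = 1) hr.ne' : (r-1) ≠ 0),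
          zero_smul, sub_zero, ContinuousLinearMap.zero_apply, sub_zero]
        rw [norm_smul, Real.norm_of_nonneg (Real.rpow_nonneg (norm_nonneg _) _)]
        have h2 := Real.rpow_add' (x := ‖y (x+v)‖) (norm_nonneg _) (y := r - 1) (z := 1)
          (by rw [sub_add_cancel]; positivity)
        rw [sub_add_cancel, Real.rpow_one] at h2
        rw [← h2]
      rw [h1, Real.norm_of_nonneg (Real.rpow_nonneg (norm_nonneg v) _)]
      calc ‖y (x + v)‖ ^ r ≤ (K * ‖v‖) ^ r :=
            Real.rpow_le_rpow (norm_nonneg _) hyb (by linarith)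
        _ = (K:ℝ) ^ r * ‖v‖ ^ r := Real.mul_rpow (by positivity) (norm_nonneg v)
    exact hb.trans_isLittleO (isLittleO_norm_rpow' (by linarith))
  · have hc : HasFDerivAt (fun v => ‖y v‖ ^ (r - 1))
        (((r - 1) * ‖y x‖ ^ (r - 3)) • ((innerSL ℝ (y x) : E →L[ℝ] ℝ).comp (fderiv ℝ y x))) x := by
      have := (hasFDerivAt_norm_rpow_ne (c := r - 1) h0).comp x
        ((hy.differentiable one_ne_zero) x).hasFDerivAt
      have h3 : r - 1 - 2 = r - 3 := by ring
      rw [h3, ContinuousLinearMap.smul_comp] at this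
      exact this
    exact hc.smul ((hy.differentiable one_ne_zero) x).hasFDerivAt

lemma hasFDerivAt_norm_rpow_comp {d : ℕ} {c : ℝ} (hc : 1 < c)
    {y : EuclideanSpace ℝ (Fin d) → EuclideanSpace ℝ (Fin d)} (hy1 : ContDiff ℝ 1 y)
    (X : EuclideanSpace ℝ (Fin d)) :
    HasFDerivAt (fun v => ‖y v‖ ^ c)
      ((c * ‖y X‖ ^ (c - 2)) •
        ((innerSL ℝ (y X)).comp (fderiv ℝ y X))) X := by
  have h := (hasFDerivAt_norm_rpow (y X) hc).comp X ((hy1.differentiable one_ne_zero) X).hasFDerivAt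
  rwa [ContinuousLinearMap.smul_comp] at h

lemma grad_sq_eq {d : ℕ} {r : ℝ} (hr : 1 < r)
    {y : EuclideanSpace ℝ (Fin d) → EuclideanSpace ℝ (Fin d)} (hy1 : ContDiff ℝ 1 y)
    (X : EuclideanSpace ℝ (Fin d)) :
    ‖gradient (fun v => ‖y v‖ ^ ((r + 1) / 2)) X‖ ^ 2
      = ((r + 1) / 2) ^ 2 *
        (‖y X‖ ^ (r - 3) *
          ∑ j, (⟪y X, fderiv ℝ y X (EuclideanSpace.single j 1)⟫ : ℝ) ^ 2) := by
  have hc : (1:ℝ) < (r + 1) / 2 := by linarith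
  have hD := hasFDerivAt_norm_rpow_comp hc hy1 X
  have hgr := hD.differentiableAt.hasGradientAt
  have huniq := hgr.hasFDerivAt.unique hD
  have hcoord : ∀ j : Fin d,
      gradient (fun v => ‖y v‖ ^ ((r + 1) / 2)) X j
        = ((r + 1) / 2 * ‖y X‖ ^ ((r + 1) / 2 - 2)) *
            (⟪y X, fderiv ℝ y X (EuclideanSpace.single j 1)⟫ : ℝ) := by
    intro j
    have h := congrArg (fun L => L (EuclideanSpace.single j 1)) huniq
    simp only [InnerProductSpace.toDual_apply_apply, ContinuousLinearMap.smul_apply,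
      ContinuousLinearMap.coe_comp', Function.comp_apply, innerSL_apply_apply, smul_eq_mul] at h
    rw [EuclideanSpace.inner_single_right] at h
    simpa using h
  have hnorm : ‖gradient (fun v => ‖y v‖ ^ ((r + 1) / 2)) X‖ ^ 2
      = ∑ j, (gradient (fun v => ‖y v‖ ^ ((r + 1) / 2)) X j) ^ 2 := by
    rw [EuclideanSpace.norm_eq, Real.sq_sqrt (by positivity)]
    refine Finset.sum_congr rfl fun j _ => ?_
    rw [Real.norm_eq_abs, sq_abs]
  rw [hnorm]
  simp only [hcoord]
  rcases eq_or_ne ‖y X‖ 0 with h0 | h0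
  · have hy0 : y X = 0 := norm_eq_zero.mp h0
    simp [hy0]
  · have hsq : ((r + 1) / 2 * ‖y X‖ ^ ((r + 1) / 2 - 2)) ^ 2
        = ((r + 1) / 2) ^ 2 * ‖y X‖ ^ (r - 3) := by
      rw [mul_pow]
      congr 1
      rw [← Real.rpow_natCast (‖y X‖ ^ ((r + 1) / 2 - 2)) 2, ← Real.rpow_mul (norm_nonneg _)]
      norm_num
      ring_nf
    rw [Finset.mul_sum, Finset.mul_sum]
    refine Finset.sum_congr rfl fun j _ => ?_
    rw [mul_pow, hsq]
    ring

lemma continuous_P {d : ℕ} {r : ℝ} (hr : 1 < r)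
    {y : EuclideanSpace ℝ (Fin d) → EuclideanSpace ℝ (Fin d)} (hy1 : ContDiff ℝ 1 y) :
    Continuous (fun X => ‖y X‖ ^ (r - 3) *
      ∑ j, (⟪y X, fderiv ℝ y X (EuclideanSpace.single j 1)⟫ : ℝ) ^ 2) := by
  have hyc : Continuous y := hy1.continuous
  have hYjc : ∀ j : Fin d, Continuous fun X => fderiv ℝ y X (EuclideanSpace.single j 1) :=
    fun j => ((hy1.fderiv_right (m := 0) (by norm_num)).clm_apply contDiff_const).continuous
  have hSc : Continuous fun X => ∑ j, (⟪y X, fderiv ℝ y X (EuclideanSpace.single j 1)⟫ : ℝ) ^ 2 :=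
    continuous_finset_sum _ fun j _ => (hyc.inner (hYjc j)).pow 2
  have hbndc : Continuous fun X =>
      ‖y X‖ ^ (r - 1) * ∑ j, ‖fderiv ℝ y X (EuclideanSpace.single j 1)‖ ^ 2 :=
    ((hyc.norm.rpow_const fun X => Or.inr (by linarith)).mul
      (continuous_finset_sum _ fun j _ => (hYjc j).norm.pow 2))
  rw [continuous_iff_continuousAt]
  intro X₀
  have hj2 : ∀ (X : EuclideanSpace ℝ (Fin d)) (w : EuclideanSpace ℝ (Fin d)),
      (⟪y X, w⟫ : ℝ) ^ 2 ≤ ‖y X‖ ^ 2 * ‖w‖ ^ 2 := by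
    intro X w
    calc (⟪y X, w⟫ : ℝ) ^ 2 = |(⟪y X, w⟫ : ℝ)| ^ 2 := (sq_abs _).symm
      _ ≤ (‖y X‖ * ‖w‖) ^ 2 := by
          have h := abs_real_inner_le_norm (y X) w
          exact pow_le_pow_left₀ (abs_nonneg _) h 2
      _ = ‖y X‖ ^ 2 * ‖w‖ ^ 2 := mul_pow _ _ _
  have hle : ∀ X, ‖y X‖ ^ (r - 3) *
      (∑ j, (⟪y X, fderiv ℝ y X (EuclideanSpace.single j 1)⟫ : ℝ) ^ 2)
      ≤ ‖y X‖ ^ (r - 1) * ∑ j, ‖fderiv ℝ y X (EuclideanSpace.single j 1)‖ ^ 2 := by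
    intro X
    rcases eq_or_ne (y X) 0 with hX0 | hX0
    · simp only [hX0, inner_zero_left, ne_eq, OfNat.ofNat_ne_zero, not_false_eq_true, zero_pow,
        Finset.sum_const_zero, mul_zero]
      positivity
    · have hpos : (0:ℝ) < ‖y X‖ := norm_pos_iff.mpr hX0
      have h1 : ∑ j, (⟪y X, fderiv ℝ y X (EuclideanSpace.single j 1)⟫ : ℝ) ^ 2
          ≤ ‖y X‖ ^ 2 * ∑ j, ‖fderiv ℝ y X (EuclideanSpace.single j 1)‖ ^ 2 := by
        rw [Finset.mul_sum]
        exact Finset.sum_le_sum fun j _ => hj2 X _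
      calc ‖y X‖ ^ (r - 3) *
          (∑ j, (⟪y X, fderiv ℝ y X (EuclideanSpace.single j 1)⟫ : ℝ) ^ 2)
          ≤ ‖y X‖ ^ (r - 3) *
            (‖y X‖ ^ 2 * ∑ j, ‖fderiv ℝ y X (EuclideanSpace.single j 1)‖ ^ 2) :=
            mul_le_mul_of_nonneg_left h1 (Real.rpow_nonneg (norm_nonneg _) _)
        _ = ‖y X‖ ^ (r - 1) * ∑ j, ‖fderiv ℝ y X (EuclideanSpace.single j 1)‖ ^ 2 := by
            rw [← mul_assoc]
            congr 1
            rw [← Real.rpow_natCast ‖y X‖ 2, ← Real.rpow_add hpos,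
              show r - 3 + (2:ℕ) = r - 1 by push_cast; ring]
  by_cases h0 : y X₀ = 0
  · have hfX₀ : ‖y X₀‖ ^ (r - 3) *
        (∑ j, (⟪y X₀, fderiv ℝ y X₀ (EuclideanSpace.single j 1)⟫ : ℝ) ^ 2) = 0 := by
      simp [h0]
    rw [ContinuousAt, hfX₀]
    have hb0 : ‖y X₀‖ ^ (r - 1) * ∑ j, ‖fderiv ℝ y X₀ (EuclideanSpace.single j 1)‖ ^ 2 = 0 := by
      rw [h0, norm_zero, Real.zero_rpow (by intro h; exact absurd (by linarith : r = 1) hr.ne'),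
        zero_mul]
    refine tendsto_of_tendsto_of_tendsto_of_le_of_le (g := fun _ => (0:ℝ))
      tendsto_const_nhds ?_ (fun X => by positivity) hle
    have := hbndc.continuousAt (x := X₀)
    rw [ContinuousAt, hb0] at this
    exact this
  · exact (((hyc.norm.continuousAt).rpow_const
      (Or.inl (norm_ne_zero_iff.mpr h0))).mul hSc.continuousAt)


/-- The explicit derivative of `g = ‖y ·‖^(r-1) • y ·`. -/
def Gc {d : ℕ} (r : ℝ) (y : EuclideanSpace ℝ (Fin d) → EuclideanSpace ℝ (Fin d))
    (X : EuclideanSpace ℝ (Fin d)) :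
    EuclideanSpace ℝ (Fin d) →L[ℝ] EuclideanSpace ℝ (Fin d) :=
  ‖y X‖ ^ (r - 1) • fderiv ℝ y X +
    ((((r - 1) * ‖y X‖ ^ (r - 3)) •
      ((innerSL ℝ (y X)).comp (fderiv ℝ y X))).smulRight (y X))

/-- The pointwise divergence of the vector field `F_j = ⟪∂_j y, g⟫`. -/
def Dfun {d : ℕ} (r : ℝ) (y : EuclideanSpace ℝ (Fin d) → EuclideanSpace ℝ (Fin d))
    (X : EuclideanSpace ℝ (Fin d)) : ℝ :=
  (⟪vecLaplacian y X, ‖y X‖ ^ (r - 1) • y X⟫ : ℝ) +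
    ∑ j, (⟪fderiv ℝ y X (EuclideanSpace.single j 1),
      Gc r y X (EuclideanSpace.single j 1)⟫ : ℝ)

lemma sumG_eq {d : ℕ} (r : ℝ) (y : EuclideanSpace ℝ (Fin d) → EuclideanSpace ℝ (Fin d))
    (X : EuclideanSpace ℝ (Fin d)) :
    ∑ j, (⟪fderiv ℝ y X (EuclideanSpace.single j 1),
        Gc r y X (EuclideanSpace.single j 1)⟫ : ℝ)
      = ‖y X‖ ^ (r - 1) * frobSq (fderiv ℝ y X) +
        (r - 1) * (‖y X‖ ^ (r - 3) *
          ∑ j, (⟪y X, fderiv ℝ y X (EuclideanSpace.single j 1)⟫ : ℝ) ^ 2) := by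
  simp only [frobSq, Finset.mul_sum]
  rw [← Finset.sum_add_distrib]
  refine Finset.sum_congr rfl fun j _ => ?_
  rw [Gc]
  simp only [ContinuousLinearMap.add_apply, ContinuousLinearMap.smul_apply,
    ContinuousLinearMap.smulRight_apply, ContinuousLinearMap.coe_comp', Function.comp_apply,
    innerSL_apply_apply, inner_add_right, real_inner_smul_right, smul_eq_mul]
  rw [real_inner_self_eq_norm_sq, real_inner_comm (fderiv ℝ y X (EuclideanSpace.single j 1)) (y X)]
  ring

lemma continuous_Dfun {d : ℕ} {r : ℝ} (hr : 1 < r)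
    {y : EuclideanSpace ℝ (Fin d) → EuclideanSpace ℝ (Fin d)} (hy : ContDiff ℝ 2 y) :
    Continuous (Dfun r y) := by
  have hy1 : ContDiff ℝ 1 y := hy.of_le one_le_two
  have hyc : Continuous y := hy1.continuous
  have hY : ContDiff ℝ 1 (fderiv ℝ y) := hy.fderiv_right (m := 1) (by norm_num)
  have hYjc : ∀ j : Fin d, Continuous fun X => fderiv ℝ y X (EuclideanSpace.single j 1) :=
    fun j => (hY.clm_apply contDiff_const).continuous
  have hgc : Continuous fun X => ‖y X‖ ^ (r - 1) • y X :=
    (hyc.norm.rpow_const fun X => Or.inr (by linarith)).smul hyc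
  have hLapc : Continuous (vecLaplacian y) := by
    have : Continuous fun X => ∑ j, fderiv ℝ
        (fun v => fderiv ℝ y v (EuclideanSpace.single j 1)) X (EuclideanSpace.single j 1) :=
      continuous_finset_sum _ fun j _ =>
        (((hY.clm_apply contDiff_const).fderiv_right (m := 0) (by norm_num)).clm_apply
          contDiff_const).continuous
    exact this
  have h2 : Continuous fun X => ∑ j, (⟪fderiv ℝ y X (EuclideanSpace.single j 1),
      Gc r y X (EuclideanSpace.single j 1)⟫ : ℝ) := by
    have heq : (fun X => ∑ j, (⟪fderiv ℝ y X (EuclideanSpace.single j 1),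
        Gc r y X (EuclideanSpace.single j 1)⟫ : ℝ))
        = fun X => ‖y X‖ ^ (r - 1) * frobSq (fderiv ℝ y X) +
          (r - 1) * (‖y X‖ ^ (r - 3) *
            ∑ j, (⟪y X, fderiv ℝ y X (EuclideanSpace.single j 1)⟫ : ℝ) ^ 2) :=
      funext fun X => sumG_eq r y X
    rw [heq]
    refine ((hyc.norm.rpow_const fun X => Or.inr (by linarith)).mul ?_).add
      (continuous_const.mul (continuous_P hr hy1))
    have : Continuous fun X => ∑ j, ‖fderiv ℝ y X (EuclideanSpace.single j 1)‖ ^ 2 :=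
      continuous_finset_sum _ fun j _ => (hYjc j).norm.pow 2
    exact this
  exact (hLapc.inner hgc).add h2

theorem div_int_zero {n : ℕ} {r : ℝ} (hr : 1 < r)
    {y : EuclideanSpace ℝ (Fin (n+1)) → EuclideanSpace ℝ (Fin (n+1))}
    (hy : ContDiff ℝ 2 y) (hyper : IsZdPeriodic y)
    (hgd : ∀ X, HasFDerivAt (fun v => ‖y v‖ ^ (r - 1) • y v) (Gc r y X) X) :
    ∫ X in unitCube (n+1), Dfun r y X = 0 := by
  classical
  have hy1 : ContDiff ℝ 1 y := hy.of_le one_le_two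
  have hdy : Differentiable ℝ y := hy1.differentiable one_ne_zero
  have hY : ContDiff ℝ 1 (fderiv ℝ y) := hy.fderiv_right (m := 1) (by norm_num)
  set σe : (Fin (n+1) → ℝ) ≃L[ℝ] EuclideanSpace ℝ (Fin (n+1)) :=
    (EuclideanSpace.equiv (Fin (n+1)) ℝ).symm with hσe
  -- periodicity of the derivative
  have hYper : ∀ (X : EuclideanSpace ℝ (Fin (n+1))) (k : Fin (n+1) → ℤ),
      fderiv ℝ y (X + (WithLp.equiv 2 (Fin (n+1) → ℝ)).symm (fun i => (k i : ℝ))) =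
        fderiv ℝ y X := by
    intro X k
    set c := (WithLp.equiv 2 (Fin (n+1) → ℝ)).symm (fun i => (k i : ℝ))
    have h1 : (fun v => y (v + c)) = y := funext fun v => hyper v k
    have h2 : HasFDerivAt (fun v => y (v + c)) (fderiv ℝ y (X + c)) X := by
      have h := (hdy (X + c)).hasFDerivAt.comp X ((hasFDerivAt_id X).add_const c)
      exact h
    rw [h1] at h2
    exact (h2.fderiv).symm
  -- the vector field in pi-coordinates
  set Fp : (Fin (n+1) → ℝ) → (Fin (n+1) → ℝ) := fun x j =>
    (⟪fderiv ℝ y (σe x) (EuclideanSpace.single j 1),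
      ‖y (σe x)‖ ^ (r - 1) • y (σe x)⟫ : ℝ) with hFp_def
  -- periodicity of Fp
  have hFper : ∀ (x : Fin (n+1) → ℝ) (k : Fin (n+1) → ℤ),
      Fp (x + fun j => (k j : ℝ)) = Fp x := by
    intro x k
    funext j
    have hadd : σe (x + fun j => (k j : ℝ)) =
        σe x + (WithLp.equiv 2 (Fin (n+1) → ℝ)).symm (fun i => (k i : ℝ)) := rfl
    simp only [hFp_def, hadd, hYper (σe x) k, hyper (σe x) k]
  -- derivative of each component of the E-version
  have hZ : ∀ (X : EuclideanSpace ℝ (Fin (n+1))) (j : Fin (n+1)),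
      HasFDerivAt (fun v => fderiv ℝ y v (EuclideanSpace.single j 1))
        (fderiv ℝ (fun v => fderiv ℝ y v (EuclideanSpace.single j 1)) X) X :=
    fun X j => (((hY.clm_apply contDiff_const).differentiable one_ne_zero) X).hasFDerivAt
  set ψ : EuclideanSpace ℝ (Fin (n+1)) → Fin (n+1) →
      (EuclideanSpace ℝ (Fin (n+1)) →L[ℝ] ℝ) := fun X j =>
    (fderivInnerCLM ℝ (fderiv ℝ y X (EuclideanSpace.single j 1),
        ‖y X‖ ^ (r - 1) • y X)).comp
      ((fderiv ℝ (fun v => fderiv ℝ y v (EuclideanSpace.single j 1)) X).prod (Gc r y X))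
    with hψ_def
  have hφ : ∀ (X : EuclideanSpace ℝ (Fin (n+1))) (j : Fin (n+1)),
      HasFDerivAt (fun X => (⟪fderiv ℝ y X (EuclideanSpace.single j 1),
          ‖y X‖ ^ (r - 1) • y X⟫ : ℝ)) (ψ X j) X :=
    fun X j => (hZ X j).inner ℝ (hgd X)
  set Fp' : (Fin (n+1) → ℝ) → ((Fin (n+1) → ℝ) →L[ℝ] (Fin (n+1) → ℝ)) := fun x =>
    ContinuousLinearMap.pi (fun j => (ψ (σe x) j).comp (σe : (Fin (n+1) → ℝ) →L[ℝ] _))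
    with hFp'_def
  have hFpD : ∀ x, HasFDerivAt Fp (Fp' x) x := by
    intro x
    rw [hFp'_def]
    apply hasFDerivAt_pi.mpr
    intro j
    exact (hφ (σe x) j).comp x (σe.hasFDerivAt)
  -- the divergence in pi coordinates
  have hdivpt : ∀ x : Fin (n+1) → ℝ,
      (∑ i, Fp' x (Pi.single i 1) i) = Dfun r y (σe x) := by
    intro x
    have hsingle : ∀ i : Fin (n+1),
        σe (Pi.single i 1) = EuclideanSpace.single i 1 := fun i => rfl
    have happ : ∀ i : Fin (n+1), Fp' x (Pi.single i 1) i =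
        (⟪fderiv ℝ y (σe x) (EuclideanSpace.single i 1),
            Gc r y (σe x) (EuclideanSpace.single i 1)⟫ : ℝ) +
          (⟪fderiv ℝ (fun v => fderiv ℝ y v (EuclideanSpace.single i 1)) (σe x)
              (EuclideanSpace.single i 1),
            ‖y (σe x)‖ ^ (r - 1) • y (σe x)⟫ : ℝ) := by
      intro i
      rw [hFp'_def]
      simp only [ContinuousLinearMap.pi_apply, ContinuousLinearMap.coe_comp',
        Function.comp_apply, ContinuousLinearEquiv.coe_coe, hsingle i, hψ_def,
        ContinuousLinearMap.prod_apply, fderivInnerCLM_apply]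
    rw [Finset.sum_congr rfl fun i _ => happ i, Finset.sum_add_distrib]
    rw [Dfun]
    have hlap : ∑ i, (⟪fderiv ℝ (fun v => fderiv ℝ y v (EuclideanSpace.single i 1)) (σe x)
          (EuclideanSpace.single i 1), ‖y (σe x)‖ ^ (r - 1) • y (σe x)⟫ : ℝ)
        = (⟪vecLaplacian y (σe x), ‖y (σe x)‖ ^ (r - 1) • y (σe x)⟫ : ℝ) := by
      rw [vecLaplacian, sum_inner]
    rw [hlap]
    ring
  -- continuity of Dfun
  have hyc : Continuous y := hdy.continuous
  have hYjc : ∀ j : Fin (n+1), Continuous fun X => fderiv ℝ y X (EuclideanSpace.single j 1) :=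
    fun j => (hY.clm_apply contDiff_const).continuous
  have hgc : Continuous fun X => ‖y X‖ ^ (r - 1) • y X :=
    (hyc.norm.rpow_const fun X => Or.inr (by linarith)).smul hyc
  have hLapc : Continuous (vecLaplacian y) := by
    have : Continuous fun X => ∑ j, fderiv ℝ
        (fun v => fderiv ℝ y v (EuclideanSpace.single j 1)) X (EuclideanSpace.single j 1) :=
      continuous_finset_sum _ fun j _ =>
        (((hY.clm_apply contDiff_const).fderiv_right (m := 0) (by norm_num)).clm_apply
          contDiff_const).continuous
    exact this
  have hDc : Continuous (Dfun r y) := continuous_Dfun hr hy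
  -- apply the divergence theorem on the box [0,1]^{n+1}
  set a : Fin (n+1) → ℝ := fun _ => 0 with ha_def
  set b : Fin (n+1) → ℝ := fun _ => 1 with hb_def
  have hle : a ≤ b := fun i => by rw [ha_def, hb_def]; norm_num
  have hFpc : Continuous Fp :=
    continuous_pi fun j => ((hYjc j).inner hgc).comp σe.continuous
  have Hi : IntegrableOn (fun x => ∑ i, Fp' x (Pi.single i 1) i) (Set.Icc a b) volume := by
    have hi1 : IntegrableOn (fun x => Dfun r y (σe x)) (Set.Icc a b) volume :=
      ((hDc.comp σe.continuous).continuousOn).integrableOn_compact isCompact_Icc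
    exact hi1.congr_fun (fun x _ => (hdivpt x).symm) measurableSet_Icc
  have hdivthm := integral_divergence_of_hasFDerivAt_off_countable a b hle Fp Fp'
    ∅ Set.countable_empty hFpc.continuousOn
    (fun x hx => hFpD x) Hi
  -- boundary terms vanish
  have hbd : ∑ i : Fin (n+1),
      ((∫ x in Set.Icc (a ∘ i.succAbove) (b ∘ i.succAbove), Fp (i.insertNth (b i) x) i) -
        ∫ x in Set.Icc (a ∘ i.succAbove) (b ∘ i.succAbove), Fp (i.insertNth (a i) x) i) = 0 := by
    refine Finset.sum_eq_zero fun i _ => ?_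
    rw [sub_eq_zero]
    refine setIntegral_congr_fun measurableSet_Icc fun x _ => ?_
    have hins : i.insertNth (b i) x = i.insertNth (a i) x +
        fun j => (((Pi.single i 1 : Fin (n+1) → ℤ) j : ℤ) : ℝ) := by
      funext j
      rcases eq_or_ne j i with rfl | hj
      · simp [ha_def, hb_def]
      · obtain ⟨k, rfl⟩ := Fin.exists_succAbove_eq hj
        simp [Pi.single_eq_of_ne (Fin.succAbove_ne i k)]
    rw [hins, hFper (i.insertNth (a i) x) (Pi.single i 1)]
  rw [hbd] at hdivthm
  -- transfer to the unit cube
  have hset : unitCube (n+1) =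
      (MeasurableEquiv.toLp 2 (Fin (n+1) → ℝ)).symm ⁻¹' (Set.Icc a b) := by
    ext X
    rw [Set.mem_preimage, Set.mem_Icc]
    constructor
    · intro hX
      exact ⟨Pi.le_def.mpr fun i => (hX i).1, Pi.le_def.mpr fun i => (hX i).2⟩
    · intro hX i
      exact ⟨Pi.le_def.mp hX.1 i, Pi.le_def.mp hX.2 i⟩
  have htrans := (EuclideanSpace.volume_preserving_symm_measurableEquiv_toLp
      (Fin (n+1))).setIntegral_preimage_emb
    (MeasurableEquiv.toLp 2 (Fin (n+1) → ℝ)).symm.measurableEmbedding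
    (fun x => Dfun r y (σe x)) (Set.Icc a b)
  calc ∫ X in unitCube (n+1), Dfun r y X
      = ∫ X in (MeasurableEquiv.toLp 2 (Fin (n+1) → ℝ)).symm ⁻¹' (Set.Icc a b),
          Dfun r y (σe ((MeasurableEquiv.toLp 2 (Fin (n+1) → ℝ)).symm X)) := by rw [hset]; rfl
    _ = ∫ x in Set.Icc a b, Dfun r y (σe x) := htrans
    _ = ∫ x in Set.Icc a b, ∑ i, Fp' x (Pi.single i 1) i :=
        (setIntegral_congr_fun measurableSet_Icc fun x _ => (hdivpt x).symm)
    _ = 0 := hdivthm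


end LDIAux

/-- Identity (3) of the paper (on the torus): for `r > 1` and a `C²`,
`ℤ^d`-periodic vector field `y`, the function `h(x) = ‖y(x)‖^{(r+1)/2}` is
differentiable and
`∫_Q ⟨−Δy, ‖y‖^{r−1} y⟩ = ∫_Q ‖y‖^{r−1} ‖Dy‖_F² + (4(r−1)/(r+1)²) ∫_Q ‖∇h‖²`. -/
theorem laplacian_damping_identity (d : ℕ) (hd : 1 ≤ d) (r : ℝ) (hr : 1 < r)
    (y : EuclideanSpace ℝ (Fin d) → EuclideanSpace ℝ (Fin d))
    (hy : ContDiff ℝ 2 y) (hyper : IsZdPeriodic y) :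
    Differentiable ℝ (fun x : EuclideanSpace ℝ (Fin d) => ‖y x‖ ^ ((r + 1) / 2)) ∧
    ∫ x in unitCube d, ⟪-vecLaplacian y x, (‖y x‖ ^ (r - 1)) • y x⟫ =
      (∫ x in unitCube d, ‖y x‖ ^ (r - 1) * frobSq (fderiv ℝ y x)) +
        (4 * (r - 1) / (r + 1) ^ 2) *
          ∫ x in unitCube d,
            ‖gradient (fun v : EuclideanSpace ℝ (Fin d) => ‖y v‖ ^ ((r + 1) / 2)) x‖ ^ 2 := by
  classical
  obtain ⟨n, rfl⟩ : ∃ n, d = n + 1 := ⟨d - 1, (Nat.succ_pred_eq_of_pos hd).symm⟩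
  have hc : (1:ℝ) < (r + 1) / 2 := by linarith
  have hy1 : ContDiff ℝ 1 y := hy.of_le one_le_two
  have hdy : Differentiable ℝ y := hy1.differentiable one_ne_zero
  have hdiff : Differentiable ℝ (fun x => ‖y x‖ ^ ((r + 1) / 2)) :=
    fun x => ((hasFDerivAt_norm_rpow (y x) hc).comp x (hdy x).hasFDerivAt).differentiableAt
  refine ⟨hdiff, ?_⟩
  have hgd : ∀ X, HasFDerivAt (fun v => ‖y v‖ ^ (r - 1) • y v) (LDIAux.Gc r y X) X :=
    fun X => LDIAux.hasFDerivAt_rpow_smul hr hy1 X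
  have hdiv0 := LDIAux.div_int_zero hr hy hyper hgd
  -- pointwise identity
  have hpt : ∀ X, (⟪-vecLaplacian y X, (‖y X‖ ^ (r - 1)) • y X⟫ : ℝ)
      = (‖y X‖ ^ (r - 1) * frobSq (fderiv ℝ y X)
          + (r - 1) * (‖y X‖ ^ (r - 3) *
            ∑ j, (⟪y X, fderiv ℝ y X (EuclideanSpace.single j 1)⟫ : ℝ) ^ 2))
        - LDIAux.Dfun r y X := by
    intro X
    rw [LDIAux.Dfun, LDIAux.sumG_eq r y X, inner_neg_left]
    ring
  -- continuity and integrability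
  have hyc : Continuous y := hdy.continuous
  have hYjc : ∀ j : Fin (n+1), Continuous fun X => fderiv ℝ y X (EuclideanSpace.single j 1) :=
    fun j => ((hy.fderiv_right (m := 1) (by norm_num)).clm_apply contDiff_const).continuous
  have hB : Continuous fun X => ‖y X‖ ^ (r - 1) * frobSq (fderiv ℝ y X) := by
    refine (hyc.norm.rpow_const fun X => Or.inr (by linarith)).mul ?_
    have : Continuous fun X => ∑ j, ‖fderiv ℝ y X (EuclideanSpace.single j 1)‖ ^ 2 :=
      continuous_finset_sum _ fun j _ => (hYjc j).norm.pow 2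
    exact this
  have hP := LDIAux.continuous_P hr hy1
  have hDc := LDIAux.continuous_Dfun hr hy
  have hcomp : IsCompact (unitCube (n+1)) := by
    have hset : unitCube (n+1) = (EuclideanSpace.equiv (Fin (n+1)) ℝ).toHomeomorph ⁻¹'
        (Set.Icc (fun _ => (0:ℝ)) (fun _ => (1:ℝ))) := by
      ext X
      rw [Set.mem_preimage, Set.mem_Icc]
      constructor
      · intro hX
        exact ⟨Pi.le_def.mpr fun i => (hX i).1, Pi.le_def.mpr fun i => (hX i).2⟩
      · intro hX i
        exact ⟨Pi.le_def.mp hX.1 i, Pi.le_def.mp hX.2 i⟩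
    rw [hset]
    exact (EuclideanSpace.equiv (Fin (n+1)) ℝ).toHomeomorph.isCompact_preimage.mpr isCompact_Icc
  have hms : MeasurableSet (unitCube (n+1)) := hcomp.measurableSet
  have hIB : IntegrableOn (fun X => ‖y X‖ ^ (r - 1) * frobSq (fderiv ℝ y X))
      (unitCube (n+1)) volume := hB.continuousOn.integrableOn_compact hcomp
  have hIP : IntegrableOn (fun X => (r - 1) * (‖y X‖ ^ (r - 3) *
      ∑ j, (⟪y X, fderiv ℝ y X (EuclideanSpace.single j 1)⟫ : ℝ) ^ 2))
      (unitCube (n+1)) volume :=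
    (continuous_const.mul hP).continuousOn.integrableOn_compact hcomp
  have hID : IntegrableOn (LDIAux.Dfun r y) (unitCube (n+1)) volume :=
    hDc.continuousOn.integrableOn_compact hcomp
  have hleft : ∫ X in unitCube (n+1), (⟪-vecLaplacian y X, (‖y X‖ ^ (r - 1)) • y X⟫ : ℝ)
      = (∫ X in unitCube (n+1), ‖y X‖ ^ (r - 1) * frobSq (fderiv ℝ y X))
        + (r - 1) * ∫ X in unitCube (n+1), (‖y X‖ ^ (r - 3) *
            ∑ j, (⟪y X, fderiv ℝ y X (EuclideanSpace.single j 1)⟫ : ℝ) ^ 2) := by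
    calc ∫ X in unitCube (n+1), (⟪-vecLaplacian y X, (‖y X‖ ^ (r - 1)) • y X⟫ : ℝ)
        = ∫ X in unitCube (n+1), ((‖y X‖ ^ (r - 1) * frobSq (fderiv ℝ y X)
            + (r - 1) * (‖y X‖ ^ (r - 3) *
              ∑ j, (⟪y X, fderiv ℝ y X (EuclideanSpace.single j 1)⟫ : ℝ) ^ 2))
          - LDIAux.Dfun r y X) := by
          exact setIntegral_congr_fun hms fun X _ => hpt X
      _ = (∫ X in unitCube (n+1), (‖y X‖ ^ (r - 1) * frobSq (fderiv ℝ y X)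
            + (r - 1) * (‖y X‖ ^ (r - 3) *
              ∑ j, (⟪y X, fderiv ℝ y X (EuclideanSpace.single j 1)⟫ : ℝ) ^ 2)))
          - ∫ X in unitCube (n+1), LDIAux.Dfun r y X := integral_sub (hIB.add hIP) hID
      _ = ∫ X in unitCube (n+1), (‖y X‖ ^ (r - 1) * frobSq (fderiv ℝ y X)
            + (r - 1) * (‖y X‖ ^ (r - 3) *
              ∑ j, (⟪y X, fderiv ℝ y X (EuclideanSpace.single j 1)⟫ : ℝ) ^ 2)) := by
          rw [hdiv0, sub_zero]
      _ = (∫ X in unitCube (n+1), ‖y X‖ ^ (r - 1) * frobSq (fderiv ℝ y X))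
          + ∫ X in unitCube (n+1), (r - 1) * (‖y X‖ ^ (r - 3) *
              ∑ j, (⟪y X, fderiv ℝ y X (EuclideanSpace.single j 1)⟫ : ℝ) ^ 2) :=
          integral_add hIB hIP
      _ = _ := by rw [integral_const_mul]
  have hg3 : ∫ X in unitCube (n+1),
      ‖gradient (fun v : EuclideanSpace ℝ (Fin (n+1)) => ‖y v‖ ^ ((r + 1) / 2)) X‖ ^ 2
      = ((r + 1) / 2) ^ 2 * ∫ X in unitCube (n+1), (‖y X‖ ^ (r - 3) *
          ∑ j, (⟪y X, fderiv ℝ y X (EuclideanSpace.single j 1)⟫ : ℝ) ^ 2) := by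
    simp only [LDIAux.grad_sq_eq hr hy1]
    rw [integral_const_mul]
  rw [hleft, hg3]
  have hne : (r + 1) ≠ 0 := by positivity
  congr 1
  rw [← mul_assoc]
  congr 1
  field_simp
  ring

end
end

section
/- Let d ∈ {2,3}, let μ, β > 0 and let r > 3 be real numbers, and set ϱ := ((r−3)/(2μ(r−1)))·(2/(βμ(r−1)))^{2/(r−3)}. Then for every κ ≥ ϱ and all twice continuously differentiable, ℤ^d-periodic, divergence-free vector fields y, z : ℝ^d → ℝ^d one has μ·∫_Q ‖Dy(x) − Dz(x)‖_F² dx + ∫_Q ⟨((y·∇)y)(x) − ((z·∇)z)(x), y(x) − z(x)⟩ dx + β·∫_Q ⟨‖y(x)‖^{r−1}y(x) − ‖z(x)‖^{r−1}z(x), y(x) − z(x)⟩ dx + κ·∫_Q ‖y(x) − z(x)‖² dx ≥ (μ/2)·∫_Q ‖Dy(x) − Dz(x)‖_F² dx, where Q = [0,1]^d. -/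
open MeasureTheory RealInnerProductSpace

noncomputable section

lemma unitCube_eq_iInter (d : ℕ) : unitCube d =
    ⋂ i, (fun x : EuclideanSpace ℝ (Fin d) => x i) ⁻¹' Set.Icc (0:ℝ) 1 := by
  ext x; simp [unitCube]

lemma measurableSet_unitCube (d : ℕ) : MeasurableSet (unitCube d) := by
  rw [unitCube_eq_iInter]
  exact MeasurableSet.iInter fun i =>
    ((EuclideanSpace.proj i : EuclideanSpace ℝ (Fin d) →L[ℝ] ℝ).continuous.measurable)
      measurableSet_Icc

lemma isCompact_unitCube (d : ℕ) : IsCompact (unitCube d) := by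
  have hc : IsClosed (unitCube d) := by
    rw [unitCube_eq_iInter]
    exact isClosed_iInter fun i => isClosed_Icc.preimage
      (EuclideanSpace.proj i : EuclideanSpace ℝ (Fin d) →L[ℝ] ℝ).continuous
  have hb : Bornology.IsBounded (unitCube d) := by
    rw [isBounded_iff_forall_norm_le]
    refine ⟨Real.sqrt d, fun x hx => ?_⟩
    rw [EuclideanSpace.norm_eq]
    have : ∑ i, ‖x i‖ ^ 2 ≤ (d : ℝ) := by
      calc ∑ i, ‖x i‖ ^ 2 ≤ ∑ _i : Fin d, (1:ℝ) := by
            refine Finset.sum_le_sum fun i _ => ?_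
            have h1 := (hx i).1; have h2 := (hx i).2
            rw [Real.norm_eq_abs, abs_of_nonneg h1]
            nlinarith
        _ = d := by simp
    exact Real.sqrt_le_sqrt this
  exact Metric.isCompact_of_isClosed_isBounded hc hb

lemma integrableOn_unitCube {d : ℕ} {f : EuclideanSpace ℝ (Fin d) → ℝ} (hf : Continuous f) :
    IntegrableOn f (unitCube d) :=
  hf.continuousOn.integrableOn_compact (isCompact_unitCube d)

lemma frobSq_nonneg {d : ℕ} (L : EuclideanSpace ℝ (Fin d) →L[ℝ] EuclideanSpace ℝ (Fin d)) :
    0 ≤ frobSq L := Finset.sum_nonneg fun _ _ => sq_nonneg _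

lemma norm_apply_le_sqrt_frobSq {d : ℕ}
    (L : EuclideanSpace ℝ (Fin d) →L[ℝ] EuclideanSpace ℝ (Fin d))
    (v : EuclideanSpace ℝ (Fin d)) :
    ‖L v‖ ≤ Real.sqrt (frobSq L) * ‖v‖ := by
  have hv : v = ∑ j, v j • EuclideanSpace.single j (1:ℝ) := by
    ext i
    have : (∑ j, v j • EuclideanSpace.single j (1:ℝ)) i
        = ∑ j, (v j • EuclideanSpace.single j (1:ℝ)) i := by
      rw [WithLp.ofLp_sum]; exact Finset.sum_apply i Finset.univ _
    rw [this]
    simp [EuclideanSpace.single_apply]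
  calc ‖L v‖ = ‖∑ j, v j • L (EuclideanSpace.single j 1)‖ := by
        conv_lhs => rw [hv]
        rw [map_sum]
        simp
    _ ≤ ∑ j, ‖v j • L (EuclideanSpace.single j 1)‖ := norm_sum_le _ _
    _ = ∑ j, |v j| * ‖L (EuclideanSpace.single j 1)‖ := by
        simp [norm_smul]
    _ ≤ Real.sqrt (∑ j, |v j| ^ 2) * Real.sqrt (∑ j, ‖L (EuclideanSpace.single j 1)‖ ^ 2) :=
        Real.sum_mul_le_sqrt_mul_sqrt _ _ _
    _ = Real.sqrt (frobSq L) * ‖v‖ := by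
        rw [mul_comm, frobSq, EuclideanSpace.norm_eq]
        simp [Real.norm_eq_abs, sq_abs]

lemma inner_apply_le {d : ℕ} {μ : ℝ} (hμ : 0 < μ)
    (L : EuclideanSpace ℝ (Fin d) →L[ℝ] EuclideanSpace ℝ (Fin d))
    (w z : EuclideanSpace ℝ (Fin d)) :
    ⟪L w, z⟫ ≤ μ/2 * frobSq L + 1/(2*μ) * (‖z‖^2 * ‖w‖^2) := by
  set s := Real.sqrt (frobSq L) with hs
  set c := ‖w‖ * ‖z‖ with hc
  have h1 : ⟪L w, z⟫ ≤ ‖L w‖ * ‖z‖ := real_inner_le_norm _ _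
  have h2 : ‖L w‖ * ‖z‖ ≤ s * c := by
    rw [hc, ← mul_assoc]
    exact mul_le_mul_of_nonneg_right (norm_apply_le_sqrt_frobSq L w) (norm_nonneg _)
  have h3 : s ^ 2 = frobSq L := Real.sq_sqrt (frobSq_nonneg L)
  have h4 : μ/2 * frobSq L + 1/(2*μ) * (‖z‖^2 * ‖w‖^2) - s * c
      = (1/(2*μ)) * (μ * s - c)^2 := by
    rw [← h3, hc]; field_simp; ring
  have h5 : 0 ≤ (1/(2*μ)) * (μ * s - c)^2 :=
    mul_nonneg (by positivity) (sq_nonneg _)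
  linarith

lemma inner_power_mono {d : ℕ} {r : ℝ} (hr : 3 < r) (a b : EuclideanSpace ℝ (Fin d)) :
    (1/2) * ‖b‖ ^ (r-1) * ‖a - b‖ ^ 2 ≤ ⟪(‖a‖ ^ (r-1)) • a - (‖b‖ ^ (r-1)) • b, a - b⟫ := by
  set A := ‖a‖ ^ (r-1) with hA
  set B := ‖b‖ ^ (r-1) with hB
  have hA0 : 0 ≤ A := Real.rpow_nonneg (norm_nonneg a) _
  have hB0 : 0 ≤ B := Real.rpow_nonneg (norm_nonneg b) _
  have hexp : ⟪A • a - B • b, a - b⟫ =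
      A * ‖a‖^2 + B * ‖b‖^2 - (A + B) * ⟪a, b⟫ := by
    rw [inner_sub_left, inner_sub_right, inner_sub_right, real_inner_smul_left,
      real_inner_smul_left, real_inner_smul_left, real_inner_smul_left,
      real_inner_self_eq_norm_sq, real_inner_self_eq_norm_sq, real_inner_comm b a]
    ring
  have hnsq : ‖a - b‖^2 = ‖a‖^2 - 2 * ⟪a,b⟫ + ‖b‖^2 := by
    rw [norm_sub_sq_real]
  have hkey : 0 ≤ (A - B) * (‖a‖^2 - ‖b‖^2) := by
    rcases le_total ‖a‖ ‖b‖ with h | h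
    · have hAB : A ≤ B := Real.rpow_le_rpow (norm_nonneg a) h (by linarith)
      have hsq : ‖a‖^2 ≤ ‖b‖^2 := pow_le_pow_left₀ (norm_nonneg a) h 2
      nlinarith [mul_nonneg (sub_nonneg.2 hAB) (sub_nonneg.2 hsq)]
    · have hAB : B ≤ A := Real.rpow_le_rpow (norm_nonneg b) h (by linarith)
      have hsq : ‖b‖^2 ≤ ‖a‖^2 := pow_le_pow_left₀ (norm_nonneg b) h 2
      exact mul_nonneg (by linarith) (by linarith)
  nlinarith [mul_nonneg hA0 (sq_nonneg ‖a - b‖), hexp, hnsq]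

lemma young_scalar {μ β r : ℝ} (hμ : 0 < μ) (hβ : 0 < β) (hr : 3 < r)
    {s : ℝ} (hs : 0 ≤ s) :
    1/(2*μ) * s^2 ≤ β/2 * s ^ (r-1)
      + ((r - 3) / (2 * μ * (r - 1))) * (2 / (β * μ * (r - 1))) ^ (2 / (r - 3)) := by
  have hr1 : (0:ℝ) < r - 1 := by linarith
  have hr3 : (0:ℝ) < r - 3 := by linarith
  set p : ℝ := (r-1)/2 with hp
  set q : ℝ := (r-1)/(r-3) with hq
  have hpq : p.HolderConjugate q := by
    rw [Real.holderConjugate_iff]; constructor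
    · rw [hp, lt_div_iff₀ (by norm_num : (0:ℝ) < 2)]; linarith
    · rw [hp, hq]; field_simp; ring
  -- k and c
  set k : ℝ := μ * β * (r-1) / 2 with hk
  have hk0 : 0 < k := by positivity
  set c : ℝ := k ^ (2/(r-1)) with hc
  have hc0 : 0 < c := Real.rpow_pos_of_pos hk0 _
  have hyoung := Real.young_inequality_of_nonneg
    (mul_nonneg hc0.le (sq_nonneg s)) (le_of_lt (by positivity : (0:ℝ) < 1/c)) hpq
  -- (c * s^2) ^ p = k * s ^ (r-1)
  have hcp : c ^ p = k := by
    rw [hc, ← Real.rpow_mul hk0.le]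
    have : 2/(r-1) * p = 1 := by rw [hp]; field_simp
    rw [this, Real.rpow_one]
  have h1 : (c * s^2) ^ p = k * s ^ (r-1) := by
    rw [Real.mul_rpow hc0.le (sq_nonneg s), hcp]
    congr 1
    rw [← Real.rpow_natCast s 2, ← Real.rpow_mul hs]
    congr 1
    rw [hp]; field_simp
    norm_num
  -- (1/c) ^ q = (2 / (β * μ * (r-1))) ^ (2/(r-3))
  have h2 : (1/c) ^ q = (2 / (β * μ * (r - 1))) ^ (2 / (r - 3)) := by
    have e1 : (1:ℝ)/c = k ^ (-(2/(r-1))) := by rw [Real.rpow_neg hk0.le, hc, one_div]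
    rw [e1, ← Real.rpow_mul hk0.le]
    have e2 : -(2/(r-1)) * q = -(2/(r-3)) := by rw [hq]; field_simp
    rw [e2, Real.rpow_neg hk0.le, ← Real.inv_rpow hk0.le]
    congr 1
    rw [hk, show μ*β*(r-1)/2 = (β*μ*(r-1))/2 by ring, inv_div]
  have key : c * s^2 * (1/c) = s^2 := by field_simp
  rw [key, h1, h2] at hyoung
  -- hyoung : s^2 ≤ k * s^(r-1) / p + (...)^(2/(r-3)) / q
  have hkp : k / p = μ * β := by rw [hk, hp]; field_simp
  have hq' : (2 / (β * μ * (r - 1))) ^ (2 / (r - 3)) / q * (1/(2*μ))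
      = ((r - 3) / (2 * μ * (r - 1))) * (2 / (β * μ * (r - 1))) ^ (2 / (r - 3)) := by
    rw [hq]; field_simp
  have hmul := mul_le_mul_of_nonneg_right hyoung (le_of_lt (by positivity : (0:ℝ) < 1/(2*μ)))
  calc 1/(2*μ) * s^2 = s^2 * (1/(2*μ)) := by ring
    _ ≤ (k * s ^ (r-1) / p + (2 / (β * μ * (r - 1))) ^ (2 / (r - 3)) / q) * (1/(2*μ)) := hmul
    _ = (k/p) * s^(r-1) * (1/(2*μ))
        + (2 / (β * μ * (r - 1))) ^ (2 / (r - 3)) / q * (1/(2*μ)) := by ring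
    _ = β/2 * s ^ (r-1)
        + ((r - 3) / (2 * μ * (r - 1))) * (2 / (β * μ * (r - 1))) ^ (2 / (r - 3)) := by
        rw [hkp, hq']
        have : μ * β * s ^ (r-1) * (1/(2*μ)) = β/2 * s^(r-1) := by field_simp
        rw [this]

lemma integral_deriv_single_eq_zero {n : ℕ} (i : Fin (n+1))
    (F : EuclideanSpace ℝ (Fin (n+1)) → ℝ) (hF : ContDiff ℝ 1 F)
    (hper : ∀ (x : EuclideanSpace ℝ (Fin (n+1))) (k : Fin (n+1) → ℤ),
      F (x + (WithLp.equiv 2 (Fin (n+1) → ℝ)).symm (fun i => (k i : ℝ))) = F x) :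
    ∫ x in unitCube (n+1), fderiv ℝ F x (EuclideanSpace.single i 1) = 0 := by
  classical
  set G : EuclideanSpace ℝ (Fin (n+1)) → ℝ :=
    fun x => fderiv ℝ F x (EuclideanSpace.single i 1) with hG
  have hGcont : Continuous G := ((hF.continuous_fderiv one_ne_zero).clm_apply continuous_const)
  set e := (MeasurableEquiv.toLp 2 (Fin (n+1) → ℝ)).symm with he
  set S : Set (Fin (n+1) → ℝ) := Set.univ.pi fun _ => Set.Icc (0:ℝ) 1 with hS
  have hcube : unitCube (n+1) = e ⁻¹' S := by
    ext x
    simp [unitCube, hS, Set.mem_pi, he, Pi.le_def,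
      forall_and]
  -- transfer to Pi space
  have step2 : ∫ x in unitCube (n+1), G x = ∫ p in S, G (e.symm p) := by
    rw [hcube]
    have := (EuclideanSpace.volume_preserving_symm_measurableEquiv_toLp
      (Fin (n+1))).setIntegral_preimage_emb e.measurableEmbedding
      (fun p => G (e.symm p)) S
    exact this
  -- peel off coordinate i
  set f := (MeasurableEquiv.piFinSuccAbove (fun _ : Fin (n+1) => ℝ) i).symm with hf
  have hfmp : MeasurePreserving f :=
    (volume_preserving_piFinSuccAbove (fun _ : Fin (n+1) => ℝ) i).symm
  have hfeq : ∀ q : ℝ × (Fin n → ℝ), f q = i.insertNth q.1 q.2 := fun q => rfl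
  have hfpre : f ⁻¹' S = (Set.Icc (0:ℝ) 1) ×ˢ (Set.univ.pi fun _ : Fin n => Set.Icc (0:ℝ) 1) := by
    ext ⟨t, u⟩
    simp only [Set.mem_preimage, hfeq, hS, Set.mem_pi, Set.mem_univ, true_implies,
      Set.mem_prod]
    rw [Fin.forall_iff_succAbove i]
    simp [Fin.insertNth_apply_same, Fin.insertNth_apply_succAbove]
  have step3 : ∫ p in S, G (e.symm p)
      = ∫ q in (Set.Icc (0:ℝ) 1) ×ˢ (Set.univ.pi fun _ : Fin n => Set.Icc (0:ℝ) 1),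
          G (e.symm (f q)) := by
    rw [← hfpre]
    exact (hfmp.setIntegral_preimage_emb f.measurableEmbedding (fun p => G (e.symm p)) S).symm
  set T : Set (ℝ × (Fin n → ℝ)) :=
    (Set.Icc (0:ℝ) 1) ×ˢ (Set.univ.pi fun _ : Fin n => Set.Icc (0:ℝ) 1) with hT
  have hTcompact : IsCompact T := isCompact_Icc.prod (isCompact_univ_pi fun _ => isCompact_Icc)
  have hesymm_cont : Continuous (⇑e.symm) :=
    (PiLp.continuousLinearEquiv 2 ℝ (fun _ : Fin (n+1) => ℝ)).symm.continuous
  have hfc : Continuous (⇑f) := by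
    have : (⇑f) = fun q : ℝ × (Fin n → ℝ) => i.insertNth q.1 q.2 := funext hfeq
    rw [this]
    exact Continuous.finInsertNth (A := fun _ : Fin (n+1) => ℝ) i continuous_fst continuous_snd
  have hh : Continuous fun q : ℝ × (Fin n → ℝ) => G (e.symm (f q)) :=
    hGcont.comp (hesymm_cont.comp hfc)
  have hint : Integrable (fun q => G (e.symm (f q)))
      (((volume : Measure ℝ).restrict (Set.Icc (0:ℝ) 1)).prod
        ((volume : Measure (Fin n → ℝ)).restrict (Set.univ.pi fun _ : Fin n => Set.Icc (0:ℝ) 1))) := by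
    rw [Measure.prod_restrict]
    exact hh.continuousOn.integrableOn_compact hTcompact
  have step5 : (∫ q in T, G (e.symm (f q)))
      = ∫ u in (Set.univ.pi fun _ : Fin n => Set.Icc (0:ℝ) 1),
          ∫ t in Set.Icc (0:ℝ) 1, G (e.symm (f (t, u))) := by
    rw [hT, Measure.volume_eq_prod, ← Measure.prod_restrict]
    exact integral_prod_symm _ hint
  -- inner FTC
  have step6 : ∀ u : Fin n → ℝ, (∫ t in Set.Icc (0:ℝ) 1, G (e.symm (f (t, u)))) = 0 := by
    intro u
    set c : EuclideanSpace ℝ (Fin (n+1)) := e.symm (i.insertNth 0 u) with hc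
    set v : EuclideanSpace ℝ (Fin (n+1)) := EuclideanSpace.single i (1:ℝ) with hv
    have hline : ∀ t : ℝ, e.symm (f (t, u)) = c + t • v := by
      intro t
      ext j
      have hj : (c + t • v) j = c j + t * v j := by
        rw [PiLp.add_apply, PiLp.smul_apply, smul_eq_mul]
      have hcj : c j = (i.insertNth (0:ℝ) u : Fin (n+1) → ℝ) j := by
        simp [hc, he, MeasurableEquiv.coe_toLp]
      rw [hfeq, hj, hcj]
      refine Fin.succAboveCases i ?_ ?_ j
      · simp [hv, Fin.insertNth_apply_same, EuclideanSpace.single_apply, he,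
          MeasurableEquiv.coe_toLp]
      · intro j'
        simp [hv, Fin.insertNth_apply_succAbove, EuclideanSpace.single_apply, he,
          MeasurableEquiv.coe_toLp,
          (Fin.succAbove_ne i j').symm]
    have hderiv : ∀ t : ℝ, HasDerivAt (fun t : ℝ => F (c + t • v))
        (fderiv ℝ F (c + t • v) v) t := by
      intro t
      have h1 : HasDerivAt (fun t : ℝ => c + t • v) v t := by
        simpa using ((hasDerivAt_id t).smul_const v).const_add c
      exact ((hF.differentiable one_ne_zero (c + t • v)).hasFDerivAt).comp_hasDerivAt t h1
    have hcongr : (∫ t in Set.Icc (0:ℝ) 1, G (e.symm (f (t, u))))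
        = ∫ t in Set.Icc (0:ℝ) 1, fderiv ℝ F (c + t • v) v := by
      refine setIntegral_congr_fun measurableSet_Icc fun t _ => ?_
      rw [hG]
      simp only [hline t, hv]
    rw [hcongr, MeasureTheory.integral_Icc_eq_integral_Ioc,
      ← intervalIntegral.integral_of_le (zero_le_one)]
    have hcont : Continuous fun t : ℝ => fderiv ℝ F (c + t • v) v := by
      apply Continuous.clm_apply ?_ continuous_const
      exact (hF.continuous_fderiv one_ne_zero).comp
        (continuous_const.add (continuous_id.smul continuous_const))
    rw [intervalIntegral.integral_eq_sub_of_hasDerivAt (fun t _ => hderiv t)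
      (hcont.intervalIntegrable 0 1)]
    have hper' : F (c + (1:ℝ) • v) = F (c + (0:ℝ) • v) := by
      rw [one_smul, zero_smul, add_zero]
      have := hper c (Pi.single i 1)
      have hvv : (WithLp.equiv 2 (Fin (n+1) → ℝ)).symm
          (fun j => ((Pi.single i (1:ℤ) : Fin (n+1) → ℤ) j : ℝ)) = v := by
        ext j
        by_cases hji : j = i
        · subst hji; simp [hv, EuclideanSpace.single_apply]
        · simp [hv, EuclideanSpace.single_apply, hji, Pi.single_apply]
      rw [hvv] at this
      exact this
    rw [hper']
    ring
  rw [step2, step3, step5]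
  calc (∫ u in (Set.univ.pi fun _ : Fin n => Set.Icc (0:ℝ) 1),
          ∫ t in Set.Icc (0:ℝ) 1, G (e.symm (f (t, u))))
      = ∫ u in (Set.univ.pi fun _ : Fin n => Set.Icc (0:ℝ) 1), (0:ℝ) := by
        refine setIntegral_congr_fun (MeasurableSet.univ_pi fun _ => measurableSet_Icc)
          fun u _ => step6 u
    _ = 0 := by simp

lemma euclid_decomp {d : ℕ} (v : EuclideanSpace ℝ (Fin d)) :
    v = ∑ j, v j • EuclideanSpace.single j (1:ℝ) := by
  ext i
  have : (∑ j, v j • EuclideanSpace.single j (1:ℝ)) i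
      = ∑ j, (v j • EuclideanSpace.single j (1:ℝ)) i := by
    rw [WithLp.ofLp_sum]; exact Finset.sum_apply i Finset.univ _
  rw [this]
  simp [EuclideanSpace.single_apply]

lemma coord_fderiv {d : ℕ} {v : EuclideanSpace ℝ (Fin d) → EuclideanSpace ℝ (Fin d)}
    (hv : Differentiable ℝ v) (x w : EuclideanSpace ℝ (Fin d)) (i : Fin d) :
    fderiv ℝ (fun y => v y i) x w = fderiv ℝ v x w i := by
  have h1 : (fun y => v y i) = (⇑(EuclideanSpace.proj i : EuclideanSpace ℝ (Fin d) →L[ℝ] ℝ)) ∘ v :=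
    rfl
  rw [h1, fderiv_comp x ((EuclideanSpace.proj i :
      EuclideanSpace ℝ (Fin d) →L[ℝ] ℝ).differentiableAt) (hv x),
    ContinuousLinearMap.fderiv]
  rfl

-- integration by parts with divergence-free advecting field
lemma integral_ibp {n : ℕ}
    (v p q : EuclideanSpace ℝ (Fin (n+1)) → EuclideanSpace ℝ (Fin (n+1)))
    (hv : ContDiff ℝ 1 v) (hp : ContDiff ℝ 1 p) (hq : ContDiff ℝ 1 q)
    (hvper : IsZdPeriodic v) (hpper : IsZdPeriodic p) (hqper : IsZdPeriodic q)
    (hvdiv : IsDivFree v) :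
    ∫ x in unitCube (n+1), (⟪fderiv ℝ p x (v x), q x⟫ + ⟪fderiv ℝ q x (v x), p x⟫) = 0 := by
  classical
  set F : Fin (n+1) → EuclideanSpace ℝ (Fin (n+1)) → ℝ :=
    fun i x => v x i * ⟪p x, q x⟫ with hF
  have hphi : ContDiff ℝ 1 fun x => ⟪p x, q x⟫ := hp.inner ℝ hq
  have hFc : ∀ i, ContDiff ℝ 1 (F i) := by
    intro i
    exact (((EuclideanSpace.proj i :
      EuclideanSpace ℝ (Fin (n+1)) →L[ℝ] ℝ).contDiff).comp hv).mul hphi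
  have hFper : ∀ i (x : EuclideanSpace ℝ (Fin (n+1))) (k : Fin (n+1) → ℤ),
      F i (x + (WithLp.equiv 2 (Fin (n+1) → ℝ)).symm (fun i => (k i : ℝ))) = F i x := by
    intro i x k
    rw [hF]
    simp only [hvper x k, hpper x k, hqper x k]
  -- pointwise identity
  have hpt : ∀ x : EuclideanSpace ℝ (Fin (n+1)),
      ∑ i, fderiv ℝ (F i) x (EuclideanSpace.single i 1)
        = ⟪fderiv ℝ p x (v x), q x⟫ + ⟪fderiv ℝ q x (v x), p x⟫ := by
    intro x
    have hvd : Differentiable ℝ v := hv.differentiable one_ne_zero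
    have hvdi : ∀ i, DifferentiableAt ℝ (fun y => v y i) x := fun i =>
      (((EuclideanSpace.proj i : EuclideanSpace ℝ (Fin (n+1)) →L[ℝ] ℝ).differentiable).comp hvd) x
    have hphid : DifferentiableAt ℝ (fun y => ⟪p y, q y⟫) x :=
      (hphi.differentiable one_ne_zero) x
    have hterm : ∀ i, fderiv ℝ (F i) x (EuclideanSpace.single i 1)
        = v x i * fderiv ℝ (fun y => ⟪p y, q y⟫) x (EuclideanSpace.single i 1)
          + (⟪p x, q x⟫) * fderiv ℝ v x (EuclideanSpace.single i 1) i := by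
      intro i
      simp only [hF]
      rw [fderiv_fun_mul (hvdi i) hphid]
      simp only [ContinuousLinearMap.add_apply, ContinuousLinearMap.smul_apply, smul_eq_mul]
      rw [coord_fderiv hvd x _ i]
    rw [Finset.sum_congr rfl fun i _ => hterm i, Finset.sum_add_distrib]
    have h2 : ∑ i, (⟪p x, q x⟫) * fderiv ℝ v x (EuclideanSpace.single i 1) i = 0 := by
      rw [← Finset.mul_sum, hvdiv x, mul_zero]
    have h1 : ∑ i, v x i * fderiv ℝ (fun y => ⟪p y, q y⟫) x (EuclideanSpace.single i 1)
        = fderiv ℝ (fun y => ⟪p y, q y⟫) x (v x) := by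
      conv_rhs => rw [euclid_decomp (v x)]
      rw [map_sum]
      refine Finset.sum_congr rfl fun i _ => ?_
      rw [(fderiv ℝ (fun y => ⟪p y, q y⟫) x).map_smul, smul_eq_mul]
    rw [h1, h2, add_zero,
      fderiv_inner_apply ℝ ((hp.differentiable one_ne_zero) x) ((hq.differentiable one_ne_zero) x)]
    rw [real_inner_comm (p x)]
    ring
  -- integrate
  have hcongr : ∫ x in unitCube (n+1), (⟪fderiv ℝ p x (v x), q x⟫ + ⟪fderiv ℝ q x (v x), p x⟫)
      = ∫ x in unitCube (n+1), ∑ i, fderiv ℝ (F i) x (EuclideanSpace.single i 1) := by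
    refine setIntegral_congr_fun (measurableSet_unitCube _) fun x _ => (hpt x).symm
  rw [hcongr, integral_finset_sum]
  · exact Finset.sum_eq_zero fun i _ =>
      integral_deriv_single_eq_zero i (F i) (hFc i) (hFper i)
  · intro i _
    refine integrableOn_unitCube ?_
    exact ((hFc i).continuous_fderiv one_ne_zero).clm_apply continuous_const

/-- Monotonicity of the shifted CBF operator `G + κI` (Step I of Proposition 3.1):
for `d ∈ {2,3}`, `μ, β > 0`, `r > 3`,
`ϱ = ((r−3)/(2μ(r−1)))(2/(βμ(r−1)))^{2/(r−3)}` and `κ ≥ ϱ`, and smooth periodic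
divergence-free `y, z`,
`μ∫‖Dy−Dz‖_F² + ∫⟨(y·∇)y−(z·∇)z, y−z⟩ + β∫⟨‖y‖^{r−1}y−‖z‖^{r−1}z, y−z⟩ + κ∫‖y−z‖²
  ≥ (μ/2)∫‖Dy−Dz‖_F²` over `Q = [0,1]^d`. -/
theorem cbf_shifted_monotone (d : ℕ) (hd : d = 2 ∨ d = 3)
    (μ β r : ℝ) (hμ : 0 < μ) (hβ : 0 < β) (hr : 3 < r) (κ : ℝ)
    (hκ : ((r - 3) / (2 * μ * (r - 1))) * (2 / (β * μ * (r - 1))) ^ (2 / (r - 3)) ≤ κ)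
    (y z : EuclideanSpace ℝ (Fin d) → EuclideanSpace ℝ (Fin d))
    (hy : ContDiff ℝ 2 y) (hz : ContDiff ℝ 2 z)
    (hyper : IsZdPeriodic y) (hzper : IsZdPeriodic z)
    (hydiv : IsDivFree y) (hzdiv : IsDivFree z) :
    μ * (∫ x in unitCube d, frobSq (fderiv ℝ y x - fderiv ℝ z x))
      + (∫ x in unitCube d, ⟪fderiv ℝ y x (y x) - fderiv ℝ z x (z x), y x - z x⟫)
      + β * (∫ x in unitCube d,
          ⟪(‖y x‖ ^ (r - 1)) • y x - (‖z x‖ ^ (r - 1)) • z x, y x - z x⟫)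
      + κ * (∫ x in unitCube d, ‖y x - z x‖ ^ 2)
    ≥ (μ / 2) * ∫ x in unitCube d, frobSq (fderiv ℝ y x - fderiv ℝ z x) := by
  obtain ⟨n, rfl⟩ : ∃ n, d = n + 1 := by rcases hd with h | h <;> exact ⟨d - 1, by omega⟩
  clear hd
  set Q := unitCube (n+1) with hQ
  set w : EuclideanSpace ℝ (Fin (n+1)) → EuclideanSpace ℝ (Fin (n+1)) :=
    fun x => y x - z x with hw
  have hy1 : ContDiff ℝ 1 y := hy.of_le one_le_two
  have hz1 : ContDiff ℝ 1 z := hz.of_le one_le_two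
  have hw1 : ContDiff ℝ 1 w := hy1.sub hz1
  have hyd : Differentiable ℝ y := hy1.differentiable one_ne_zero
  have hzd : Differentiable ℝ z := hz1.differentiable one_ne_zero
  have hfdw : ∀ x, fderiv ℝ w x = fderiv ℝ y x - fderiv ℝ z x := fun x =>
    fderiv_sub (hyd x) (hzd x)
  have hwper : IsZdPeriodic w := fun x k => by simp only [hw, hyper x k, hzper x k]
  have hwdiv : IsDivFree w := by
    intro x
    simp only [hfdw x, ContinuousLinearMap.sub_apply, PiLp.sub_apply]
    rw [Finset.sum_sub_distrib, hydiv x, hzdiv x, sub_zero]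
  -- continuity facts
  have hDy : Continuous (fderiv ℝ y) := hy.continuous_fderiv two_ne_zero
  have hDz : Continuous (fderiv ℝ z) := hz.continuous_fderiv two_ne_zero
  have hDw : Continuous fun x => fderiv ℝ y x - fderiv ℝ z x := hDy.sub hDz
  have hyc : Continuous y := hy1.continuous
  have hzc : Continuous z := hz1.continuous
  have hwc : Continuous w := hyc.sub hzc
  have hA_cont : Continuous fun x => frobSq (fderiv ℝ y x - fderiv ℝ z x) := by
    apply continuous_finset_sum
    intro j _
    exact ((hDw.clm_apply continuous_const).norm.pow 2)
  have hB1_cont : Continuous fun x => ⟪fderiv ℝ w x (y x), w x⟫ := by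
    have : Continuous fun x => fderiv ℝ w x := by
      have : (fun x => fderiv ℝ w x) = fun x => fderiv ℝ y x - fderiv ℝ z x :=
        funext hfdw
      rw [this]; exact hDw
    exact (this.clm_apply hyc).inner hwc
  have hDw' : Continuous fun x => fderiv ℝ w x := by
    have : (fun x => fderiv ℝ w x) = fun x => fderiv ℝ y x - fderiv ℝ z x := funext hfdw
    rw [this]; exact hDw
  have hB2_cont : Continuous fun x => ⟪fderiv ℝ z x (w x), w x⟫ :=
    ((hDz.clm_apply hwc).inner hwc)
  have hB3_cont : Continuous fun x => ⟪fderiv ℝ w x (w x), z x⟫ :=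
    ((hDw'.clm_apply hwc).inner hzc)
  have hC_cont : Continuous fun x =>
      ⟪(‖y x‖ ^ (r - 1)) • y x - (‖z x‖ ^ (r - 1)) • z x, y x - z x⟫ := by
    have h1 : Continuous fun x => (‖y x‖ ^ (r-1)) • y x :=
      (hyc.norm.rpow_const fun x => Or.inr (by linarith)).smul hyc
    have h2 : Continuous fun x => (‖z x‖ ^ (r-1)) • z x :=
      (hzc.norm.rpow_const fun x => Or.inr (by linarith)).smul hzc
    exact (h1.sub h2).inner hwc
  have hW_cont : Continuous fun x => ‖y x - z x‖ ^ 2 := hwc.norm.pow 2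
  -- IBP identities
  have hI1 : (∫ x in Q, ⟪fderiv ℝ w x (y x), w x⟫) = 0 := by
    have h0 := integral_ibp y w w hy1 hw1 hw1 hyper hwper hwper hydiv
    rw [integral_add (integrableOn_unitCube hB1_cont) (integrableOn_unitCube hB1_cont)] at h0
    rw [← hQ] at h0
    linarith
  have hI2 : (∫ x in Q, ⟪fderiv ℝ z x (w x), w x⟫) = - ∫ x in Q, ⟪fderiv ℝ w x (w x), z x⟫ := by
    have h0 := integral_ibp w z w hw1 hz1 hw1 hwper hzper hwper hwdiv
    rw [integral_add (integrableOn_unitCube hB2_cont) (integrableOn_unitCube hB3_cont)] at h0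
    rw [← hQ] at h0
    linarith
  -- decompose the convection integral
  have hconv : (∫ x in Q, ⟪fderiv ℝ y x (y x) - fderiv ℝ z x (z x), y x - z x⟫)
      = (∫ x in Q, ⟪fderiv ℝ w x (y x), w x⟫) + ∫ x in Q, ⟪fderiv ℝ z x (w x), w x⟫ := by
    rw [← integral_add (integrableOn_unitCube hB1_cont) (integrableOn_unitCube hB2_cont)]
    refine setIntegral_congr_fun (measurableSet_unitCube _) fun x _ => ?_
    have : fderiv ℝ y x (y x) - fderiv ℝ z x (z x)
        = fderiv ℝ w x (y x) + fderiv ℝ z x (w x) := by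
      rw [hfdw x]
      simp only [ContinuousLinearMap.sub_apply, hw, map_sub]
      abel
    rw [this, inner_add_left]
  rw [hconv, hI1, hI2, zero_add]
  -- final pointwise estimate
  set ϱ : ℝ := ((r - 3) / (2 * μ * (r - 1))) * (2 / (β * μ * (r - 1))) ^ (2 / (r - 3)) with hϱ
  have hpoint : ∀ x, 0 ≤ (μ/2) * frobSq (fderiv ℝ y x - fderiv ℝ z x)
      - ⟪fderiv ℝ w x (w x), z x⟫
      + β * ⟪(‖y x‖ ^ (r - 1)) • y x - (‖z x‖ ^ (r - 1)) • z x, y x - z x⟫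
      + κ * ‖y x - z x‖ ^ 2 := by
    intro x
    have h1 : ⟪fderiv ℝ w x (w x), z x⟫ ≤ μ/2 * frobSq (fderiv ℝ y x - fderiv ℝ z x)
        + 1/(2*μ) * (‖z x‖^2 * ‖w x‖^2) := by
      have h := inner_apply_le hμ (fderiv ℝ w x) (w x) (z x)
      rw [show frobSq (fderiv ℝ w x) = frobSq (fderiv ℝ y x - fderiv ℝ z x) by
        rw [hfdw x]] at h
      exact h
    have h2 : 1/(2*μ) * ‖z x‖^2 * ‖w x‖^2
        ≤ (β/2 * ‖z x‖ ^ (r-1) + ϱ) * ‖w x‖^2 :=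
      mul_le_mul_of_nonneg_right (young_scalar hμ hβ hr (norm_nonneg (z x)))
        (sq_nonneg _)
    have h3 : β * ((1/2) * ‖z x‖ ^ (r-1) * ‖y x - z x‖ ^ 2)
        ≤ β * ⟪(‖y x‖ ^ (r - 1)) • y x - (‖z x‖ ^ (r - 1)) • z x, y x - z x⟫ :=
      mul_le_mul_of_nonneg_left (inner_power_mono hr (y x) (z x)) hβ.le
    have h4 : ϱ * ‖y x - z x‖ ^ 2 ≤ κ * ‖y x - z x‖ ^ 2 :=
      mul_le_mul_of_nonneg_right hκ (sq_nonneg _)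
    have hwx : w x = y x - z x := rfl
    rw [hwx] at h1 h2
    nlinarith [h1, h2, h3, h4, sq_nonneg ‖y x - z x‖]
  have hInt1 : IntegrableOn (fun x => (μ/2) * frobSq (fderiv ℝ y x - fderiv ℝ z x)) Q :=
    (integrableOn_unitCube hA_cont).const_mul _
  have hInt2 : IntegrableOn (fun x => ⟪fderiv ℝ w x (w x), z x⟫) Q :=
    integrableOn_unitCube hB3_cont
  have hInt3 : IntegrableOn (fun x =>
      β * ⟪(‖y x‖ ^ (r - 1)) • y x - (‖z x‖ ^ (r - 1)) • z x, y x - z x⟫) Q :=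
    (integrableOn_unitCube hC_cont).const_mul _
  have hInt4 : IntegrableOn (fun x => κ * ‖y x - z x‖ ^ 2) Q :=
    (integrableOn_unitCube hW_cont).const_mul _
  have hsum : 0 ≤ ∫ x in Q, ((μ/2) * frobSq (fderiv ℝ y x - fderiv ℝ z x)
      - ⟪fderiv ℝ w x (w x), z x⟫
      + β * ⟪(‖y x‖ ^ (r - 1)) • y x - (‖z x‖ ^ (r - 1)) • z x, y x - z x⟫
      + κ * ‖y x - z x‖ ^ 2) :=
    setIntegral_nonneg (measurableSet_unitCube _) fun x _ => hpoint x
  have split1 : (∫ x in Q, ((μ/2) * frobSq (fderiv ℝ y x - fderiv ℝ z x)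
      - ⟪fderiv ℝ w x (w x), z x⟫
      + β * ⟪(‖y x‖ ^ (r - 1)) • y x - (‖z x‖ ^ (r - 1)) • z x, y x - z x⟫
      + κ * ‖y x - z x‖ ^ 2))
      = (∫ x in Q, ((μ/2) * frobSq (fderiv ℝ y x - fderiv ℝ z x)
          - ⟪fderiv ℝ w x (w x), z x⟫
          + β * ⟪(‖y x‖ ^ (r - 1)) • y x - (‖z x‖ ^ (r - 1)) • z x, y x - z x⟫))
        + ∫ x in Q, κ * ‖y x - z x‖ ^ 2 :=
    integral_add ((hInt1.sub hInt2).add hInt3) hInt4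
  have split2 : (∫ x in Q, ((μ/2) * frobSq (fderiv ℝ y x - fderiv ℝ z x)
          - ⟪fderiv ℝ w x (w x), z x⟫
          + β * ⟪(‖y x‖ ^ (r - 1)) • y x - (‖z x‖ ^ (r - 1)) • z x, y x - z x⟫))
      = (∫ x in Q, ((μ/2) * frobSq (fderiv ℝ y x - fderiv ℝ z x)
          - ⟪fderiv ℝ w x (w x), z x⟫))
        + ∫ x in Q, β * ⟪(‖y x‖ ^ (r - 1)) • y x - (‖z x‖ ^ (r - 1)) • z x, y x - z x⟫ :=
    integral_add (hInt1.sub hInt2) hInt3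
  have split3 : (∫ x in Q, ((μ/2) * frobSq (fderiv ℝ y x - fderiv ℝ z x)
          - ⟪fderiv ℝ w x (w x), z x⟫))
      = (∫ x in Q, (μ/2) * frobSq (fderiv ℝ y x - fderiv ℝ z x))
        - ∫ x in Q, ⟪fderiv ℝ w x (w x), z x⟫ :=
    integral_sub hInt1 hInt2
  have c1 : (∫ x in Q, (μ/2) * frobSq (fderiv ℝ y x - fderiv ℝ z x))
      = (μ/2) * ∫ x in Q, frobSq (fderiv ℝ y x - fderiv ℝ z x) :=
    integral_const_mul _ _
  have c2 : (∫ x in Q, β * ⟪(‖y x‖ ^ (r - 1)) • y x - (‖z x‖ ^ (r - 1)) • z x, y x - z x⟫)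
      = β * ∫ x in Q, ⟪(‖y x‖ ^ (r - 1)) • y x - (‖z x‖ ^ (r - 1)) • z x, y x - z x⟫ :=
    integral_const_mul _ _
  have c3 : (∫ x in Q, κ * ‖y x - z x‖ ^ 2) = κ * ∫ x in Q, ‖y x - z x‖ ^ 2 :=
    integral_const_mul _ _
  rw [split1, split2, split3, c1, c2, c3] at hsum
  linarith

end
end

section
/- Let d ∈ {2,3}, let μ, β > 0 and let r > 3 be real numbers, and set ϱ := ((r−3)/(2μ(r−1)))·(2/(βμ(r−1)))^{2/(r−3)}. Then for all twice continuously differentiable, ℤ^d-periodic, divergence-free vector fields y, z : ℝ^d → ℝ^d one has | ∫_Q ⟨((y·∇)y)(x) − ((z·∇)z)(x), y(x) − z(x)⟩ dx | ≤ (μ/2)·∫_Q ‖Dy(x) − Dz(x)‖_F² dx + (β/2)·∫_Q ‖z(x)‖^{r−1}‖y(x) − z(x)‖² dx + ϱ·∫_Q ‖y(x) − z(x)‖² dx, where Q = [0,1]^d. -/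
open MeasureTheory RealInnerProductSpace

noncomputable section

-- decomposition of a euclidean vector
lemma eucl_sum_single {d : ℕ} (v : EuclideanSpace ℝ (Fin d)) :
    v = ∑ i, v i • EuclideanSpace.single i 1 := by
  have := (EuclideanSpace.basisFun (Fin d) ℝ).toBasis.sum_repr v
  simp only [OrthonormalBasis.coe_toBasis_repr_apply, EuclideanSpace.basisFun_repr,
    OrthonormalBasis.coe_toBasis, EuclideanSpace.basisFun_apply] at this
  exact this.symm

lemma clm_apply_eq_sum {d : ℕ} (L : EuclideanSpace ℝ (Fin d) →L[ℝ] EuclideanSpace ℝ (Fin d))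
    (v : EuclideanSpace ℝ (Fin d)) :
    L v = ∑ i, v i • L (EuclideanSpace.single i 1) := by
  conv_lhs => rw [eucl_sum_single v]
  rw [map_sum]
  simp

lemma young_pointwise (μ β r : ℝ) (hμ : 0 < μ) (hβ : 0 < β) (hr : 3 < r)
    (t : ℝ) (ht : 0 ≤ t) :
    t ^ 2 * (1 / (2 * μ)) ≤ (β / 2) * t ^ (r - 1)
      + ((r - 3) / (2 * μ * (r - 1))) * (2 / (β * μ * (r - 1))) ^ (2 / (r - 3)) := by
  have hr1 : (0:ℝ) < r - 1 := by linarith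
  have hr3 : (0:ℝ) < r - 3 := by linarith
  set p : ℝ := (r - 1) / 2 with hp_def
  set q : ℝ := (r - 1) / (r - 3) with hq_def
  have hp1 : 1 < p := by rw [hp_def]; nlinarith
  have hp0 : 0 < p := by linarith
  have hq0 : 0 < q := by rw [hq_def]; positivity
  have hpq : p.HolderConjugate q := Real.holderConjugate_iff.mpr ⟨hp1, by
    rw [hp_def, hq_def]; field_simp; ring⟩
  set A : ℝ := μ * β * p with hA_def
  have hA0 : 0 < A := by rw [hA_def]; positivity
  set lam : ℝ := A ^ (1 / p) with hlam_def
  have hlam0 : 0 < lam := Real.rpow_pos_of_pos hA0 _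
  have young := Real.young_inequality_of_nonneg
    (mul_nonneg hlam0.le (sq_nonneg t)) (le_of_lt (by positivity : (0:ℝ) < 1 / lam)) hpq
  have hlhs : lam * t ^ 2 * (1 / lam) = t ^ 2 := by field_simp
  have hlam_p : lam ^ p = A := by
    rw [hlam_def, ← Real.rpow_mul hA0.le, one_div_mul_cancel hp0.ne', Real.rpow_one]
  have ht2 : (t ^ 2 : ℝ) = t ^ (2:ℝ) := by
    rw [← Real.rpow_natCast t 2]; norm_num
  have h2p : (2:ℝ) * p = r - 1 := by rw [hp_def]; field_simp
  have h1 : (lam * t ^ 2) ^ p = A * t ^ (r - 1) := by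
    rw [Real.mul_rpow hlam0.le (sq_nonneg t), hlam_p, ht2, ← Real.rpow_mul ht, h2p]
  have hqp : (1 / p) * q = 2 / (r - 3) := by
    rw [hp_def, hq_def]; field_simp
  have h2 : (1 / lam) ^ q = (2 / (β * μ * (r - 1))) ^ (2 / (r - 3)) := by
    rw [one_div, ← Real.rpow_neg_one lam, hlam_def, ← Real.rpow_mul hA0.le,
      ← Real.rpow_mul hA0.le]
    rw [show (1 / p * -1) * q = -(1/p * q) by ring, hqp, Real.rpow_neg hA0.le,
      ← Real.inv_rpow hA0.le]
    have hA' : A = β * μ * (r - 1) / 2 := by rw [hA_def, hp_def]; ring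
    rw [hA', inv_div]
  have key : t ^ 2 ≤ A * t ^ (r - 1) / p + (2 / (β * μ * (r - 1))) ^ (2 / (r - 3)) / q := by
    rw [hlhs, h1, h2] at young; exact young
  have htr : (0:ℝ) ≤ t ^ (r - 1) := Real.rpow_nonneg ht _
  calc t ^ 2 * (1 / (2 * μ))
      ≤ (A * t ^ (r - 1) / p + (2 / (β * μ * (r - 1))) ^ (2 / (r - 3)) / q) * (1 / (2 * μ)) :=
        mul_le_mul_of_nonneg_right key (by positivity)
    _ = (β / 2) * t ^ (r - 1)
      + ((r - 3) / (2 * μ * (r - 1))) * (2 / (β * μ * (r - 1))) ^ (2 / (r - 3)) := by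
        rw [hA_def, hq_def, hp_def]
        field_simp

lemma pointwise_bound (μ β r : ℝ) (hμ : 0 < μ) (hβ : 0 < β) (hr : 3 < r)
    (F b c : ℝ) (hF : 0 ≤ F) (hb : 0 ≤ b) (hc : 0 ≤ c) :
    c * (Real.sqrt F * b) ≤ μ / 2 * F + β / 2 * (c ^ (r - 1) * b ^ 2)
      + ((r - 3) / (2 * μ * (r - 1))) * (2 / (β * μ * (r - 1))) ^ (2 / (r - 3)) * b ^ 2 := by
  have hy := young_pointwise μ β r hμ hβ hr c hc
  have hs := Real.sq_sqrt hF
  have hsn := Real.sqrt_nonneg F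
  set s := Real.sqrt F with hs_def
  set C := (2 / (β * μ * (r - 1))) ^ (2 / (r - 3)) with hC_def
  have step1 : c * (s * b) ≤ μ/2 * s^2 + (1/(2*μ)) * (b*c)^2 := by
    have h := sq_nonneg (μ * s - b * c)
    have h2 : 0 < 2 * μ := by linarith
    rw [← sub_nonneg]
    have : μ/2 * s^2 + (1/(2*μ)) * (b*c)^2 - c * (s*b) = (μ * s - b * c)^2 / (2*μ) := by
      field_simp
      ring
    rw [this]
    positivity
  have step2 : (1/(2*μ)) * (b*c)^2 ≤ (β/2 * c^(r-1) + (r-3)/(2*μ*(r-1)) * C) * b^2 := by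
    have h := mul_le_mul_of_nonneg_right hy (sq_nonneg b)
    calc (1/(2*μ))*(b*c)^2 = (c^2 * (1/(2*μ))) * b^2 := by ring
      _ ≤ _ := h
  calc c * (s * b) ≤ μ/2 * s^2 + (β/2 * c^(r-1) + (r-3)/(2*μ*(r-1)) * C) * b^2 :=
        step1.trans (by linarith)
    _ = μ / 2 * F + β / 2 * (c ^ (r - 1) * b ^ 2) + ((r - 3) / (2 * μ * (r - 1))) * C * b^2 := by
        rw [sq, hs_def, Real.mul_self_sqrt hF]; ring

lemma divergence_integral_zero {d : ℕ} (hd : 0 < d)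
    (g : EuclideanSpace ℝ (Fin d) → EuclideanSpace ℝ (Fin d))
    (hg : ContDiff ℝ 1 g) (hper : IsZdPeriodic g) :
    ∫ x in unitCube d, ∑ i, fderiv ℝ g x (EuclideanSpace.single i 1) i = 0 := by
  obtain ⟨n, rfl⟩ : ∃ n, d = n + 1 := ⟨d - 1, (Nat.succ_pred_eq_of_pos hd).symm⟩
  set L := PiLp.continuousLinearEquiv 2 ℝ (fun _ : Fin (n+1) => ℝ) with hL
  set G : (Fin (n+1) → ℝ) → (Fin (n+1) → ℝ) := fun x => L (g (L.symm x)) with hG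
  set G' : (Fin (n+1) → ℝ) → (Fin (n+1) → ℝ) →L[ℝ] (Fin (n+1) → ℝ) :=
    fun x => ((L : EuclideanSpace ℝ (Fin (n+1)) →L[ℝ] (Fin (n+1) → ℝ)).comp
      ((fderiv ℝ g (L.symm x)).comp
        (L.symm : (Fin (n+1) → ℝ) →L[ℝ] EuclideanSpace ℝ (Fin (n+1))))) with hG'
  have hgd : Differentiable ℝ g := hg.differentiable one_ne_zero
  have hGd : ∀ x, HasFDerivAt G (G' x) x := by
    intro x
    have h1 : HasFDerivAt g (fderiv ℝ g (L.symm x)) (L.symm x) := (hgd _).hasFDerivAt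
    have h2 : HasFDerivAt (fun x => L.symm x)
        (L.symm : (Fin (n+1) → ℝ) →L[ℝ] EuclideanSpace ℝ (Fin (n+1))) x :=
      L.symm.hasFDerivAt
    have h3 := h1.comp x h2
    have h4 := (L.hasFDerivAt (x := g (L.symm x))).comp x h3
    exact h4
  have hdivG : ∀ x, (∑ i, G' x (Pi.single i 1) i)
      = ∑ i, fderiv ℝ g (L.symm x) (EuclideanSpace.single i 1) i := by
    intro x
    rfl
  have hGcont : Continuous G := by
    exact L.continuous.comp (hg.continuous.comp L.symm.continuous)
  have hG'cont : Continuous fun x => ∑ i, G' x (Pi.single i 1) i := by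
    apply continuous_finset_sum
    intro i _
    have hfd : Continuous (fderiv ℝ g) := hg.continuous_fderiv one_ne_zero
    have : Continuous fun x => fderiv ℝ g (L.symm x) (EuclideanSpace.single i 1) :=
      (hfd.comp L.symm.continuous).clm_apply continuous_const
    exact (continuous_apply i).comp (L.continuous.comp this)
  have hdiv := MeasureTheory.integral_divergence_of_hasFDerivAt_off_countable
    (a := (0 : Fin (n+1) → ℝ)) (b := 1) zero_le_one G G' ∅ Set.countable_empty
    hGcont.continuousOn (fun x _ => hGd x)
    ((hG'cont.continuousOn).integrableOn_compact isCompact_Icc)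
  have hfaces : ∀ i : Fin (n+1),
      ((∫ x in Set.Icc ((0 : Fin (n+1) → ℝ) ∘ i.succAbove) ((1 : Fin (n+1) → ℝ) ∘ i.succAbove),
          G (i.insertNth ((1 : Fin (n+1) → ℝ) i) x) i)
        - ∫ x in Set.Icc ((0 : Fin (n+1) → ℝ) ∘ i.succAbove) ((1 : Fin (n+1) → ℝ) ∘ i.succAbove),
          G (i.insertNth ((0 : Fin (n+1) → ℝ) i) x) i) = 0 := by
    intro i
    have hGeq : ∀ x : Fin n → ℝ,
        G (i.insertNth ((1 : Fin (n+1) → ℝ) i) x) = G (i.insertNth ((0 : Fin (n+1) → ℝ) i) x) := by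
      intro x
      have harg : (L.symm (i.insertNth ((1 : Fin (n+1) → ℝ) i) x))
          = L.symm (i.insertNth ((0 : Fin (n+1) → ℝ) i) x)
            + (WithLp.equiv 2 (Fin (n+1) → ℝ)).symm
                (fun j => (((Pi.single i (1:ℤ) : Fin (n+1) → ℤ) j : ℤ) : ℝ)) := by
        have hLsymm : ∀ (v : Fin (n+1) → ℝ) (j : Fin (n+1)), (L.symm v) j = v j :=
          fun v j => rfl
        ext j
        simp only [PiLp.add_apply, hLsymm, WithLp.equiv_symm_apply, PiLp.toLp_apply]
        refine Fin.succAboveCases i ?_ ?_ j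
        · simp
        · intro j'
          simp [Pi.single_eq_of_ne (Fin.succAbove_ne i j')]
      show L (g _) = L (g _)
      rw [harg, hper]
    simp only [hGeq, sub_self]
  rw [Finset.sum_eq_zero (fun i _ => hfaces i)] at hdiv
  have hmp := EuclideanSpace.volume_preserving_symm_measurableEquiv_toLp (Fin (n+1))
  have hemb : MeasurableEmbedding (MeasurableEquiv.toLp 2 (Fin (n+1) → ℝ)).symm :=
    (MeasurableEquiv.toLp 2 (Fin (n+1) → ℝ)).symm.measurableEmbedding
  have hcube : unitCube (n+1)
      = (MeasurableEquiv.toLp 2 (Fin (n+1) → ℝ)).symm ⁻¹' (Set.Icc 0 1) := by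
    ext x
    simp only [unitCube, Set.mem_setOf_eq, Set.mem_preimage, Set.mem_Icc, Set.mem_Icc,
      Pi.le_def]
    constructor
    · intro h; exact ⟨fun i => (h i).1, fun i => (h i).2⟩
    · intro h i; exact ⟨h.1 i, h.2 i⟩
  have htrans : (∫ x in unitCube (n+1), ∑ i, fderiv ℝ g x (EuclideanSpace.single i 1) i)
      = ∫ p in Set.Icc (0 : Fin (n+1) → ℝ) 1, ∑ i, G' p (Pi.single i 1) i := by
    rw [hcube]
    exact hmp.setIntegral_preimage_emb hemb (fun p => ∑ i, G' p (Pi.single i 1) i) _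
  rw [htrans, hdiv]

lemma clm_real_apply_eq_sum {d : ℕ} (c : EuclideanSpace ℝ (Fin d) →L[ℝ] ℝ)
    (v : EuclideanSpace ℝ (Fin d)) :
    c v = ∑ i, v i * c (EuclideanSpace.single i 1) := by
  conv_lhs => rw [eucl_sum_single v]
  rw [map_sum]
  simp [smul_eq_mul]

lemma div_inner_smul {d : ℕ} (a b g : EuclideanSpace ℝ (Fin d) → EuclideanSpace ℝ (Fin d))
    (ha : Differentiable ℝ a) (hb : Differentiable ℝ b) (hg : Differentiable ℝ g)
    (x : EuclideanSpace ℝ (Fin d)) :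
    ∑ i, fderiv ℝ (fun y => (⟪a y, b y⟫ : ℝ) • g y) x (EuclideanSpace.single i 1) i
      = ⟪a x, fderiv ℝ b x (g x)⟫ + ⟪fderiv ℝ a x (g x), b x⟫
        + ⟪a x, b x⟫ * ∑ i, fderiv ℝ g x (EuclideanSpace.single i 1) i := by
  have hinner : HasFDerivAt (fun y => (⟪a y, b y⟫ : ℝ))
      ((fderivInnerCLM ℝ (a x, b x)).comp ((fderiv ℝ a x).prod (fderiv ℝ b x))) x :=
    (ha x).hasFDerivAt.inner ℝ (hb x).hasFDerivAt
  have hsmul := hinner.smul (hg x).hasFDerivAt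
  rw [show (fun y => (⟪a y, b y⟫ : ℝ) • g y) = (fun y => (⟪a y, b y⟫ : ℝ)) • g from rfl, hsmul.fderiv]
  have happ : ∀ i : Fin d,
      (((⟪a x, b x⟫ : ℝ) • fderiv ℝ g x
        + ((fderivInnerCLM ℝ (a x, b x)).comp
            ((fderiv ℝ a x).prod (fderiv ℝ b x))).smulRight (g x)) (EuclideanSpace.single i 1)) i
      = ⟪a x, b x⟫ * (fderiv ℝ g x (EuclideanSpace.single i 1) i)
        + (⟪a x, fderiv ℝ b x (EuclideanSpace.single i 1)⟫
          + ⟪fderiv ℝ a x (EuclideanSpace.single i 1), b x⟫) * (g x i) := by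
    intro i
    simp only [ContinuousLinearMap.add_apply, ContinuousLinearMap.smul_apply,
      ContinuousLinearMap.smulRight_apply, ContinuousLinearMap.comp_apply,
      ContinuousLinearMap.prod_apply, fderivInnerCLM_apply, PiLp.add_apply,
      PiLp.smul_apply, smul_eq_mul]
  simp only [happ]
  rw [Finset.sum_add_distrib, ← Finset.mul_sum]
  have h1 : ∑ i, (⟪a x, fderiv ℝ b x (EuclideanSpace.single i 1)⟫
      + ⟪fderiv ℝ a x (EuclideanSpace.single i 1), b x⟫) * (g x i)
      = ⟪a x, fderiv ℝ b x (g x)⟫ + ⟪fderiv ℝ a x (g x), b x⟫ := by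
    have hc : ∀ v : EuclideanSpace ℝ (Fin d),
        (⟪a x, fderiv ℝ b x v⟫ : ℝ) + ⟪fderiv ℝ a x v, b x⟫
        = ((fderivInnerCLM ℝ (a x, b x)).comp
            ((fderiv ℝ a x).prod (fderiv ℝ b x))) v := by
      intro v
      simp [fderivInnerCLM_apply]
    simp only [hc]
    rw [clm_real_apply_eq_sum (((fderivInnerCLM ℝ (a x, b x)).comp
            ((fderiv ℝ a x).prod (fderiv ℝ b x)))) (g x)]
    exact Finset.sum_congr rfl fun i _ => by ring
  rw [h1]
  ring

/-- Estimate (2.30) of the paper: for `d ∈ {2,3}`, `μ, β > 0`, `r > 3`,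
`ϱ = ((r−3)/(2μ(r−1)))(2/(βμ(r−1)))^{2/(r−3)}`, and `C²`, `ℤ^d`-periodic,
divergence-free `y, z`,
`|∫⟨(y·∇)y−(z·∇)z, y−z⟩| ≤ (μ/2)∫‖Dy−Dz‖_F² + (β/2)∫‖z‖^{r−1}‖y−z‖² + ϱ∫‖y−z‖²`
over `Q = [0,1]^d`. -/
theorem convective_difference_estimate (d : ℕ) (hd : d = 2 ∨ d = 3)
    (μ β r : ℝ) (hμ : 0 < μ) (hβ : 0 < β) (hr : 3 < r)
    (y z : EuclideanSpace ℝ (Fin d) → EuclideanSpace ℝ (Fin d))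
    (hy : ContDiff ℝ 2 y) (hz : ContDiff ℝ 2 z)
    (hyper : IsZdPeriodic y) (hzper : IsZdPeriodic z)
    (hydiv : IsDivFree y) (hzdiv : IsDivFree z) :
    |∫ x in unitCube d, ⟪fderiv ℝ y x (y x) - fderiv ℝ z x (z x), y x - z x⟫| ≤
      (μ / 2) * (∫ x in unitCube d, frobSq (fderiv ℝ y x - fderiv ℝ z x))
      + (β / 2) * (∫ x in unitCube d, ‖z x‖ ^ (r - 1) * ‖y x - z x‖ ^ 2)
      + (((r - 3) / (2 * μ * (r - 1))) * (2 / (β * μ * (r - 1))) ^ (2 / (r - 3))) *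
          ∫ x in unitCube d, ‖y x - z x‖ ^ 2 := by
  classical
  have hd0 : 0 < d := by rcases hd with h | h <;> omega
  obtain ⟨w, hw_def⟩ : ∃ w : EuclideanSpace ℝ (Fin d) → EuclideanSpace ℝ (Fin d),
      w = fun a => y a - z a := ⟨_, rfl⟩
  obtain ⟨D, hD_def⟩ : ∃ D : EuclideanSpace ℝ (Fin d) →
      (EuclideanSpace ℝ (Fin d) →L[ℝ] EuclideanSpace ℝ (Fin d)),
      D = fun a => fderiv ℝ y a - fderiv ℝ z a := ⟨_, rfl⟩
  have hyd : Differentiable ℝ y := hy.differentiable two_ne_zero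
  have hzd : Differentiable ℝ z := hz.differentiable two_ne_zero
  have hwd : Differentiable ℝ w := by rw [hw_def]; exact hyd.sub hzd
  have hfw : ∀ a, fderiv ℝ w a = D a := by
    intro a
    rw [hw_def, hD_def]
    exact fderiv_sub (hyd a) (hzd a)
  have hyc : Continuous y := hyd.continuous
  have hzc : Continuous z := hzd.continuous
  have hwc : Continuous w := hwd.continuous
  have hDyc : Continuous (fderiv ℝ y) := hy.continuous_fderiv two_ne_zero
  have hDzc : Continuous (fderiv ℝ z) := hz.continuous_fderiv two_ne_zero
  have hDc : Continuous D := by rw [hD_def]; exact hDyc.sub hDzc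
  -- the cube is compact and measurable
  have hcube : unitCube d
      = (PiLp.continuousLinearEquiv 2 ℝ (fun _ : Fin d => ℝ)) ⁻¹' (Set.Icc 0 1) := by
    ext x
    simp only [unitCube, Set.mem_setOf_eq, Set.mem_preimage, Set.mem_Icc, Pi.le_def]
    constructor
    · intro h; exact ⟨fun i => (h i).1, fun i => (h i).2⟩
    · intro h i; exact ⟨h.1 i, h.2 i⟩
  have hcomp : IsCompact (unitCube d) := by
    rw [hcube]
    exact (PiLp.continuousLinearEquiv 2 ℝ
      (fun _ : Fin d => ℝ)).toHomeomorph.isCompact_preimage.2 isCompact_Icc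
  have hmeas : MeasurableSet (unitCube d) := by
    rw [hcube]
    exact (isClosed_Icc.preimage (PiLp.continuousLinearEquiv 2 ℝ
      (fun _ : Fin d => ℝ)).continuous).measurableSet
  have hio : ∀ f : EuclideanSpace ℝ (Fin d) → ℝ, Continuous f → IntegrableOn f (unitCube d) :=
    fun f hf => hf.continuousOn.integrableOn_compact hcomp
  -- periodicity of w and the two auxiliary fields
  have hwper : IsZdPeriodic w := by
    intro a k
    rw [hw_def]
    show y _ - z _ = y a - z a
    rw [hyper, hzper]
  -- div-freeness of w
  have hwdiv : ∀ a, ∑ i, (D a) (EuclideanSpace.single i 1) i = 0 := by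
    intro a
    have h1 : ∀ i : Fin d, (D a) (EuclideanSpace.single i 1) i
        = fderiv ℝ y a (EuclideanSpace.single i 1) i
          - fderiv ℝ z a (EuclideanSpace.single i 1) i := by
      intro i
      rw [hD_def]
      simp [ContinuousLinearMap.sub_apply, PiLp.sub_apply]
    simp only [h1]
    rw [Finset.sum_sub_distrib, hydiv a, hzdiv a, sub_zero]
  -- first integral identity : ∫ ⟪D x (y x), w x⟫ = 0
  have hw1 : ContDiff ℝ 1 w := by rw [hw_def]; exact (hy.sub hz).of_le one_le_two
  have I1 : (∫ x in unitCube d, (⟪D x (y x), w x⟫ : ℝ)) = 0 := by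
    have hC1 : ContDiff ℝ 1 (fun a => (⟪w a, w a⟫ : ℝ) • y a) :=
      (hw1.inner ℝ hw1).smul (hy.of_le one_le_two)
    have hper1 : IsZdPeriodic (fun a => (⟪w a, w a⟫ : ℝ) • y a) := by
      intro a k
      simp only
      rw [hwper, hyper]
    have h0 := divergence_integral_zero hd0 (fun a => (⟪w a, w a⟫ : ℝ) • y a) hC1 hper1
    have heq : ∀ x : EuclideanSpace ℝ (Fin d),
        (∑ i, fderiv ℝ (fun a => (⟪w a, w a⟫ : ℝ) • y a) x (EuclideanSpace.single i 1) i)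
          = 2 * ⟪D x (y x), w x⟫ := by
      intro x
      rw [div_inner_smul w w y hwd hwd hyd x, hydiv x, hfw x, real_inner_comm (w x)]
      ring
    rw [setIntegral_congr_fun hmeas (fun x _ => heq x)] at h0
    rw [MeasureTheory.integral_const_mul] at h0
    linarith
  -- second integral identity : ∫ (⟪z, D w⟫ + ⟪Dz w, w⟫) = 0
  have I2 : (∫ x in unitCube d,
      ((⟪z x, D x (w x)⟫ : ℝ) + ⟪fderiv ℝ z x (w x), w x⟫)) = 0 := by
    have hC2 : ContDiff ℝ 1 (fun a => (⟪z a, w a⟫ : ℝ) • w a) :=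
      ((hz.of_le one_le_two).inner ℝ hw1).smul hw1
    have hper2 : IsZdPeriodic (fun a => (⟪z a, w a⟫ : ℝ) • w a) := by
      intro a k
      simp only
      rw [hwper, hzper]
    have h0 := divergence_integral_zero hd0 (fun a => (⟪z a, w a⟫ : ℝ) • w a) hC2 hper2
    have heq : ∀ x : EuclideanSpace ℝ (Fin d),
        (∑ i, fderiv ℝ (fun a => (⟪z a, w a⟫ : ℝ) • w a) x (EuclideanSpace.single i 1) i)
          = ⟪z x, D x (w x)⟫ + ⟪fderiv ℝ z x (w x), w x⟫ := by
      intro x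
      have := div_inner_smul z w w hzd hwd hwd x
      simp only [hfw x] at this
      rw [this, hwdiv x]
      ring
    rw [setIntegral_congr_fun hmeas (fun x _ => heq x)] at h0
    exact h0
  -- integrabilities
  have intA : IntegrableOn (fun x => (⟪z x, D x (w x)⟫ : ℝ)) (unitCube d) :=
    hio _ (hzc.inner (hDc.clm_apply hwc))
  have intB : IntegrableOn (fun x => (⟪fderiv ℝ z x (w x), w x⟫ : ℝ)) (unitCube d) :=
    hio _ ((hDzc.clm_apply hwc).inner hwc)
  have intC : IntegrableOn (fun x => (⟪D x (y x), w x⟫ : ℝ)) (unitCube d) :=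
    hio _ ((hDc.clm_apply hyc).inner hwc)
  -- ∫ ⟪Dz w, w⟫ = - ∫ ⟪z, D w⟫
  have I2' : (∫ x in unitCube d, (⟪fderiv ℝ z x (w x), w x⟫ : ℝ))
      = - ∫ x in unitCube d, (⟪z x, D x (w x)⟫ : ℝ) := by
    rw [MeasureTheory.integral_add intA intB] at I2
    linarith
  -- decomposition of the convective difference
  have hLHS : (∫ x in unitCube d,
        (⟪fderiv ℝ y x (y x) - fderiv ℝ z x (z x), y x - z x⟫ : ℝ))
      = - ∫ x in unitCube d, (⟪z x, D x (w x)⟫ : ℝ) := by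
    have hdec : ∀ x : EuclideanSpace ℝ (Fin d),
        (⟪fderiv ℝ y x (y x) - fderiv ℝ z x (z x), y x - z x⟫ : ℝ)
          = ⟪D x (y x), w x⟫ + ⟪fderiv ℝ z x (w x), w x⟫ := by
      intro x
      have h1 : fderiv ℝ y x (y x) - fderiv ℝ z x (z x)
          = D x (y x) + fderiv ℝ z x (w x) := by
        rw [hD_def, hw_def]
        simp only [ContinuousLinearMap.sub_apply, map_sub]
        abel
      have h2 : (y x - z x : EuclideanSpace ℝ (Fin d)) = w x := by rw [hw_def]
      rw [h1, h2, inner_add_left]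
    rw [setIntegral_congr_fun hmeas (fun x _ => hdec x),
      MeasureTheory.integral_add intC intB, I1, zero_add, I2']
  rw [hLHS, abs_neg]
  -- pointwise bound
  obtain ⟨ϱ, hϱ_def⟩ : ∃ q : ℝ,
      q = ((r - 3) / (2 * μ * (r - 1))) * (2 / (β * μ * (r - 1))) ^ (2 / (r - 3)) := ⟨_, rfl⟩
  have hpt : ∀ x ∈ unitCube d, |(⟪z x, D x (w x)⟫ : ℝ)|
      ≤ μ / 2 * frobSq (D x) + β / 2 * (‖z x‖ ^ (r - 1) * ‖w x‖ ^ 2) + ϱ * ‖w x‖ ^ 2 := by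
    intro x _
    have hF : (0:ℝ) ≤ frobSq (D x) := by unfold frobSq; positivity
    calc |(⟪z x, D x (w x)⟫ : ℝ)| ≤ ‖z x‖ * ‖D x (w x)‖ := abs_real_inner_le_norm _ _
      _ ≤ ‖z x‖ * (Real.sqrt (frobSq (D x)) * ‖w x‖) :=
          mul_le_mul_of_nonneg_left (norm_apply_le_sqrt_frobSq _ _) (norm_nonneg _)
      _ ≤ _ := by
          rw [hϱ_def]
          exact pointwise_bound μ β r hμ hβ hr (frobSq (D x)) ‖w x‖ ‖z x‖ hF
            (norm_nonneg _) (norm_nonneg _)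
  -- continuity of the bound pieces
  have contFrob : Continuous fun x => frobSq (D x) := by
    have : (fun x => frobSq (D x))
        = fun x => ∑ j, ‖D x (EuclideanSpace.single j 1)‖ ^ 2 := rfl
    rw [this]
    exact continuous_finset_sum _ fun j _ => (hDc.clm_apply continuous_const).norm.pow 2
  have contRpow : Continuous fun x => ‖z x‖ ^ (r - 1) := by
    rw [continuous_iff_continuousAt]
    intro x
    exact (Real.continuousAt_rpow_const _ _ (Or.inr (by linarith))).comp
      hzc.norm.continuousAt
  have contW2 : Continuous fun x => ‖w x‖ ^ 2 := hwc.norm.pow 2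
  have int1 : IntegrableOn (fun x => μ / 2 * frobSq (D x)) (unitCube d) :=
    hio _ (continuous_const.mul contFrob)
  have int2 : IntegrableOn (fun x => β / 2 * (‖z x‖ ^ (r - 1) * ‖w x‖ ^ 2)) (unitCube d) :=
    hio _ (continuous_const.mul (contRpow.mul contW2))
  have int3 : IntegrableOn (fun x => ϱ * ‖w x‖ ^ 2) (unitCube d) :=
    hio _ (continuous_const.mul contW2)
  have intAbs : IntegrableOn (fun x => |(⟪z x, D x (w x)⟫ : ℝ)|) (unitCube d) :=
    hio _ ((hzc.inner (hDc.clm_apply hwc)).abs)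
  calc |∫ x in unitCube d, (⟪z x, D x (w x)⟫ : ℝ)|
      = ‖∫ x in unitCube d, (⟪z x, D x (w x)⟫ : ℝ)‖ := (Real.norm_eq_abs _).symm
    _ ≤ ∫ x in unitCube d, ‖(⟪z x, D x (w x)⟫ : ℝ)‖ :=
        MeasureTheory.norm_integral_le_integral_norm _
    _ = ∫ x in unitCube d, |(⟪z x, D x (w x)⟫ : ℝ)| := by
        simp [Real.norm_eq_abs]
    _ ≤ ∫ x in unitCube d, (μ / 2 * frobSq (D x)
          + β / 2 * (‖z x‖ ^ (r - 1) * ‖w x‖ ^ 2) + ϱ * ‖w x‖ ^ 2) := by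
        apply setIntegral_mono_on intAbs ((int1.add int2).add int3) hmeas
        exact hpt
    _ = (μ / 2) * (∫ x in unitCube d, frobSq (D x))
          + (β / 2) * (∫ x in unitCube d, ‖z x‖ ^ (r - 1) * ‖w x‖ ^ 2)
          + ϱ * ∫ x in unitCube d, ‖w x‖ ^ 2 := by
        have int12 : IntegrableOn (fun x => μ / 2 * frobSq (D x)
            + β / 2 * (‖z x‖ ^ (r - 1) * ‖w x‖ ^ 2)) (unitCube d) := int1.add int2
        rw [MeasureTheory.integral_add int12 int3,
          MeasureTheory.integral_add int1 int2,
          MeasureTheory.integral_const_mul, MeasureTheory.integral_const_mul,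
          MeasureTheory.integral_const_mul]
    _ = _ := by
        simp only [hϱ_def, hD_def, hw_def]

end
end

section
/- Let d ∈ {2,3}, let μ, β > 0 and let r > 3 be real numbers, and set ϱ := ((r−3)/(2μ(r−1)))·(2/(βμ(r−1)))^{2/(r−3)}. Then for every twice continuously differentiable, ℤ^d-periodic vector field y : ℝ^d → ℝ^d one has | ∫_Q ⟨((y·∇)y)(x), Δy(x)⟩ dx | ≤ (μ/2)·∫_Q ‖Δy(x)‖² dx + (β/2)·∫_Q ‖y(x)‖^{r−1}‖Dy(x)‖_F² dx + ϱ·∫_Q ‖Dy(x)‖_F² dx, where Q = [0,1]^d. -/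
open MeasureTheory RealInnerProductSpace

noncomputable section

/-- Sharp Young-type inequality: for `s ≥ 0`,
`s²/(2μ) ≤ (β/2) s^(r-1) + ϱ` with the sharp constant `ϱ`. -/
lemma young_aux {μ β r : ℝ} (hμ : 0 < μ) (hβ : 0 < β) (hr : 3 < r) {s : ℝ} (hs : 0 ≤ s) :
    s ^ 2 / (2 * μ) ≤ β / 2 * s ^ (r - 1)
      + ((r - 3) / (2 * μ * (r - 1))) * (2 / (β * μ * (r - 1))) ^ (2 / (r - 3)) := by
  have hr1 : (0:ℝ) < r - 1 := by linarith
  have hr3 : (0:ℝ) < r - 3 := by linarith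
  rcases eq_or_lt_of_le hs with h0 | hspos
  · rw [← h0]
    rw [show ((0:ℝ) ^ (r - 1)) = 0 from Real.zero_rpow hr1.ne']
    simp only [ne_eq, OfNat.ofNat_ne_zero, not_false_eq_true, zero_pow, mul_zero, zero_div,
      zero_add]
    positivity
  · set θ : ℝ := 2 / (r - 1) with hθdef
    set η : ℝ := (r - 3) / (r - 1) with hηdef
    set A : ℝ := β * (r - 1) / 4 with hAdef
    set B : ℝ := 2 / (β * μ * (r - 1)) with hBdef
    have hApos : 0 < A := by positivity
    have hBpos : 0 < B := by positivity
    have hθη : θ + η = 1 := by rw [hθdef, hηdef]; field_simp; ring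
    have key := Real.geom_mean_le_arith_mean2_weighted (w₁ := θ) (w₂ := η)
      (p₁ := A * s ^ (r - 1)) (p₂ := (1 / (2 * μ)) * B ^ (2 / (r - 3)))
      (by positivity) (by positivity) (by positivity) (by positivity) hθη
    have hLHS : (A * s ^ (r - 1)) ^ θ * ((1 / (2 * μ)) * B ^ (2 / (r - 3))) ^ η
        = s ^ 2 / (2 * μ) := by
      have e1 : (r - 1) * θ = 2 := by rw [hθdef]; field_simp
      have e2 : (2 / (r - 3)) * η = θ := by rw [hηdef, hθdef]; field_simp
      have hAB : A * B = 1 / (2 * μ) := by rw [hAdef, hBdef]; field_simp; ring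
      rw [Real.mul_rpow hApos.le (Real.rpow_nonneg hs _),
          Real.mul_rpow (by positivity) (Real.rpow_nonneg hBpos.le _),
          ← Real.rpow_mul hs, ← Real.rpow_mul hBpos.le, e1, e2,
          show (2:ℝ) = ((2:ℕ):ℝ) by norm_num, Real.rpow_natCast]
      calc A ^ θ * s ^ 2 * ((1 / (2 * μ)) ^ η * B ^ θ)
          = A ^ θ * B ^ θ * (1 / (2 * μ)) ^ η * s ^ 2 := by ring
        _ = (A * B) ^ θ * (1 / (2 * μ)) ^ η * s ^ 2 := by
            rw [← Real.mul_rpow hApos.le hBpos.le]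
        _ = (1 / (2 * μ)) ^ θ * (1 / (2 * μ)) ^ η * s ^ 2 := by rw [hAB]
        _ = (1 / (2 * μ)) ^ (θ + η) * s ^ 2 := by rw [← Real.rpow_add (by positivity)]
        _ = s ^ 2 / (2 * μ) := by rw [hθη, Real.rpow_one]; ring
    have h1 : θ * (A * s ^ (r - 1)) = β / 2 * s ^ (r - 1) := by
      rw [hθdef, hAdef]; field_simp; ring
    have h2 : η * ((1 / (2 * μ)) * B ^ (2 / (r - 3)))
        = ((r - 3) / (2 * μ * (r - 1))) * B ^ (2 / (r - 3)) := by
      rw [hηdef]; field_simp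
    rw [hLHS, h1, h2] at key
    exact key

/-- The operator applied to a vector is controlled by the Frobenius norm. -/
lemma norm_apply_sq_le_frobSq {d : ℕ}
    (L : EuclideanSpace ℝ (Fin d) →L[ℝ] EuclideanSpace ℝ (Fin d))
    (v : EuclideanSpace ℝ (Fin d)) : ‖L v‖ ^ 2 ≤ ‖v‖ ^ 2 * frobSq L := by
  have hv : v = ∑ j, v j • EuclideanSpace.single j (1:ℝ) := by
    have := (EuclideanSpace.basisFun (Fin d) ℝ).sum_repr v
    simp only [EuclideanSpace.basisFun_repr, EuclideanSpace.basisFun_apply] at this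
    exact this.symm
  have h1 : ‖L v‖ ≤ ∑ j, |v j| * ‖L (EuclideanSpace.single j 1)‖ := by
    calc ‖L v‖ = ‖∑ j, v j • L (EuclideanSpace.single j 1)‖ := by
          rw [show L v = ∑ j, v j • L (EuclideanSpace.single j 1) by
            conv_lhs => rw [hv]
            simp [map_sum]]
      _ ≤ ∑ j, ‖v j • L (EuclideanSpace.single j 1)‖ := norm_sum_le _ _
      _ = ∑ j, |v j| * ‖L (EuclideanSpace.single j 1)‖ := by
          simp [norm_smul, Real.norm_eq_abs]
  have h2 : ‖L v‖ ^ 2 ≤ (∑ j, |v j| * ‖L (EuclideanSpace.single j 1)‖) ^ 2 :=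
    pow_le_pow_left₀ (norm_nonneg _) h1 2
  refine h2.trans ?_
  calc (∑ j, |v j| * ‖L (EuclideanSpace.single j 1)‖) ^ 2
      ≤ (∑ j, |v j| ^ 2) * ∑ j, ‖L (EuclideanSpace.single j 1)‖ ^ 2 :=
        Finset.sum_mul_sq_le_sq_mul_sq Finset.univ _ _
    _ = ‖v‖ ^ 2 * frobSq L := by
        rw [frobSq]
        congr 1
        rw [EuclideanSpace.norm_eq, Real.sq_sqrt (by positivity)]
        simp [sq_abs]

/-- Estimate (3.30) of the paper: for `d ∈ {2,3}`, `μ, β > 0`, `r > 3`,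
`ϱ = ((r−3)/(2μ(r−1)))(2/(βμ(r−1)))^{2/(r−3)}`, and any `C²`, `ℤ^d`-periodic `y`,
`|∫⟨(y·∇)y, Δy⟩| ≤ (μ/2)∫‖Δy‖² + (β/2)∫‖y‖^{r−1}‖Dy‖_F² + ϱ∫‖Dy‖_F²`
over `Q = [0,1]^d`. -/
theorem convective_laplacian_estimate (d : ℕ) (hd : d = 2 ∨ d = 3)
    (μ β r : ℝ) (hμ : 0 < μ) (hβ : 0 < β) (hr : 3 < r)
    (y : EuclideanSpace ℝ (Fin d) → EuclideanSpace ℝ (Fin d))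
    (hy : ContDiff ℝ 2 y) (hyper : IsZdPeriodic y) :
    |∫ x in unitCube d, ⟪fderiv ℝ y x (y x), vecLaplacian y x⟫| ≤
      (μ / 2) * (∫ x in unitCube d, ‖vecLaplacian y x‖ ^ 2)
      + (β / 2) * (∫ x in unitCube d, ‖y x‖ ^ (r - 1) * frobSq (fderiv ℝ y x))
      + (((r - 3) / (2 * μ * (r - 1))) * (2 / (β * μ * (r - 1))) ^ (2 / (r - 3))) *
          ∫ x in unitCube d, frobSq (fderiv ℝ y x) := by
  set ϱ : ℝ := ((r - 3) / (2 * μ * (r - 1))) * (2 / (β * μ * (r - 1))) ^ (2 / (r - 3)) with hϱ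
  -- continuity facts
  have hy1 : ContDiff ℝ 1 (fderiv ℝ y) := hy.fderiv_right (by norm_num)
  have hDy : Continuous (fderiv ℝ y) := hy1.continuous
  have hlap : Continuous (vecLaplacian y) := by
    unfold vecLaplacian
    refine continuous_finset_sum _ fun j _ => ?_
    have hj : ContDiff ℝ 1 fun v => fderiv ℝ y v (EuclideanSpace.single j 1) :=
      hy1.clm_apply contDiff_const
    exact (hj.continuous_fderiv one_ne_zero).clm_apply continuous_const
  have hF : Continuous fun x => frobSq (fderiv ℝ y x) := by
    unfold frobSq
    exact continuous_finset_sum _ fun j _ => ((hDy.clm_apply continuous_const).norm.pow 2)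
  have hinner : Continuous fun x => (⟪fderiv ℝ y x (y x), vecLaplacian y x⟫ : ℝ) :=
    (hDy.clm_apply hy.continuous).inner hlap
  have hg1 : Continuous fun x => ‖vecLaplacian y x‖ ^ 2 := hlap.norm.pow 2
  have hg2 : Continuous fun x => ‖y x‖ ^ (r - 1) * frobSq (fderiv ℝ y x) :=
    (hy.continuous.norm.rpow_const fun x => Or.inr (by linarith)).mul hF
  -- compactness of the cube
  have hQc : IsCompact (unitCube d) := by
    have h : unitCube d = (EuclideanSpace.equiv (Fin d) ℝ).symm ''
        Set.pi Set.univ (fun _ : Fin d => Set.Icc (0:ℝ) 1) := by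
      rw [ContinuousLinearEquiv.image_symm_eq_preimage]
      ext x
      simp only [unitCube, Set.mem_setOf_eq, Set.mem_preimage, Set.mem_pi]
      exact ⟨fun h i _ => h i, fun h i => h i trivial⟩
    rw [h]
    exact (isCompact_univ_pi fun _ => isCompact_Icc).image
      (EuclideanSpace.equiv (Fin d) ℝ).symm.continuous
  -- integrability
  have int0 : IntegrableOn (fun x => (⟪fderiv ℝ y x (y x), vecLaplacian y x⟫ : ℝ))
      (unitCube d) := hinner.continuousOn.integrableOn_compact hQc
  have int1 : IntegrableOn (fun x => ‖vecLaplacian y x‖ ^ 2) (unitCube d) :=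
    hg1.continuousOn.integrableOn_compact hQc
  have int2 : IntegrableOn (fun x => ‖y x‖ ^ (r - 1) * frobSq (fderiv ℝ y x)) (unitCube d) :=
    hg2.continuousOn.integrableOn_compact hQc
  have int3 : IntegrableOn (fun x => frobSq (fderiv ℝ y x)) (unitCube d) :=
    hF.continuousOn.integrableOn_compact hQc
  -- pointwise estimate
  have key : ∀ x, |(⟪fderiv ℝ y x (y x), vecLaplacian y x⟫ : ℝ)| ≤
      μ / 2 * ‖vecLaplacian y x‖ ^ 2
      + β / 2 * (‖y x‖ ^ (r - 1) * frobSq (fderiv ℝ y x))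
      + ϱ * frobSq (fderiv ℝ y x) := by
    intro x
    set a := fderiv ℝ y x (y x) with ha
    set b := vecLaplacian y x with hb
    set F := frobSq (fderiv ℝ y x) with hFx
    have hFnn : 0 ≤ F := frobSq_nonneg _
    have step1 : |(⟪a, b⟫ : ℝ)| ≤ ‖a‖ * ‖b‖ := abs_real_inner_le_norm a b
    have step2 : ‖a‖ * ‖b‖ ≤ μ / 2 * ‖b‖ ^ 2 + ‖a‖ ^ 2 / (2 * μ) := by
      rw [← sub_nonneg]
      have : μ / 2 * ‖b‖ ^ 2 + ‖a‖ ^ 2 / (2 * μ) - ‖a‖ * ‖b‖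
          = (μ * ‖b‖ - ‖a‖) ^ 2 / (2 * μ) := by
        field_simp
        ring
      rw [this]
      positivity
    have step3 : ‖a‖ ^ 2 / (2 * μ) ≤ ‖y x‖ ^ 2 / (2 * μ) * F := by
      rw [div_mul_eq_mul_div]
      exact (div_le_div_iff_of_pos_right (by positivity)).mpr (norm_apply_sq_le_frobSq (fderiv ℝ y x) (y x))
    have step4 : ‖y x‖ ^ 2 / (2 * μ) * F ≤ (β / 2 * ‖y x‖ ^ (r - 1) + ϱ) * F := by
      refine mul_le_mul_of_nonneg_right ?_ hFnn
      rw [hϱ]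
      exact young_aux hμ hβ hr (norm_nonneg _)
    calc |(⟪a, b⟫ : ℝ)| ≤ ‖a‖ * ‖b‖ := step1
      _ ≤ μ / 2 * ‖b‖ ^ 2 + ‖a‖ ^ 2 / (2 * μ) := step2
      _ ≤ μ / 2 * ‖b‖ ^ 2 + (β / 2 * ‖y x‖ ^ (r - 1) + ϱ) * F := by
          linarith [step3.trans step4]
      _ = μ / 2 * ‖b‖ ^ 2 + β / 2 * (‖y x‖ ^ (r - 1) * F) + ϱ * F := by ring
  -- put everything together
  have habs : |∫ x in unitCube d, (⟪fderiv ℝ y x (y x), vecLaplacian y x⟫ : ℝ)|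
      ≤ ∫ x in unitCube d, |(⟪fderiv ℝ y x (y x), vecLaplacian y x⟫ : ℝ)| := by
    simpa [Real.norm_eq_abs] using
      norm_integral_le_integral_norm (μ := volume.restrict (unitCube d))
        (fun x => (⟪fderiv ℝ y x (y x), vecLaplacian y x⟫ : ℝ))
  refine habs.trans ?_
  have hmono : ∫ x in unitCube d, |(⟪fderiv ℝ y x (y x), vecLaplacian y x⟫ : ℝ)|
      ≤ ∫ x in unitCube d, (μ / 2 * ‖vecLaplacian y x‖ ^ 2
        + β / 2 * (‖y x‖ ^ (r - 1) * frobSq (fderiv ℝ y x))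
        + ϱ * frobSq (fderiv ℝ y x)) :=
    integral_mono int0.abs
      (((int1.const_mul _).add (int2.const_mul _)).add (int3.const_mul _)) key
  refine hmono.trans_eq ?_
  have split1 : (∫ x in unitCube d, (μ / 2 * ‖vecLaplacian y x‖ ^ 2
        + β / 2 * (‖y x‖ ^ (r - 1) * frobSq (fderiv ℝ y x))
        + ϱ * frobSq (fderiv ℝ y x)))
      = (∫ x in unitCube d, (μ / 2 * ‖vecLaplacian y x‖ ^ 2
          + β / 2 * (‖y x‖ ^ (r - 1) * frobSq (fderiv ℝ y x))))
        + ∫ x in unitCube d, ϱ * frobSq (fderiv ℝ y x) :=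
    integral_add ((int1.const_mul (μ / 2)).add (int2.const_mul (β / 2)))
      (int3.const_mul ϱ)
  have split2 : (∫ x in unitCube d, (μ / 2 * ‖vecLaplacian y x‖ ^ 2
        + β / 2 * (‖y x‖ ^ (r - 1) * frobSq (fderiv ℝ y x))))
      = (∫ x in unitCube d, μ / 2 * ‖vecLaplacian y x‖ ^ 2)
        + ∫ x in unitCube d, β / 2 * (‖y x‖ ^ (r - 1) * frobSq (fderiv ℝ y x)) :=
    integral_add (int1.const_mul (μ / 2)) (int2.const_mul (β / 2))
  have c1 : (∫ x in unitCube d, μ / 2 * ‖vecLaplacian y x‖ ^ 2)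
      = μ / 2 * ∫ x in unitCube d, ‖vecLaplacian y x‖ ^ 2 := integral_const_mul _ _
  have c2 : (∫ x in unitCube d, β / 2 * (‖y x‖ ^ (r - 1) * frobSq (fderiv ℝ y x)))
      = β / 2 * ∫ x in unitCube d, ‖y x‖ ^ (r - 1) * frobSq (fderiv ℝ y x) :=
    integral_const_mul _ _
  have c3 : (∫ x in unitCube d, ϱ * frobSq (fderiv ℝ y x))
      = ϱ * ∫ x in unitCube d, frobSq (fderiv ℝ y x) := integral_const_mul _ _
  rw [split1, split2, c1, c2, c3]

end
end
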